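/- arXiv:1601.07123 — 6 statements merged into one kernel-verified Lean document; each statement's English description precedes it below -/
import Mathlib

section
/- Let ε > 0 and let g ∈ C_c^∞(ℝ) with supp g ⊆ {x ∈ ℝ : |b(x)| ≥ ε}. Then for every y ∈ ℝ, with the convention z/0 := 0, both integrals below are absolutely convergent and, via integration by parts in t, ∫_0^∞ e(y,t) g'(γ_t(y)) dt = −g(y)/b(y) + ∫_0^∞ e(y,t) · ((f(γ_t(y)) + b'(γ_t(y)))/b(γ_t(y))) · g(γ_t(y)) dt. -/
/-!
Along the trajectory `x t = γ t y`, the boundary term `F t = e(y,t) g(x t) / b(x t)` satisfies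
`F' = e g'(x) - e ((f + b') / b) g(x)` for every `t`: `g` vanishes near each zero of `b`, so
`g / b` is `C¹`. Every integrand has the form `e(y,t) φ(x t)` with `φ` continuous and compactly
supported, hence `|φ| ≤ C f` because `f > 0`, and the integrand is dominated by
`C f(x t) e(y,t) = -C ∂ₜ e(y,t)`, which is integrable because `e` is positive and decreasing.
So `F` and `F'` are integrable on `(0, ∞)`, `F` tends to `0`, and the fundamental theorem of
calculus gives `∫ F' = -F 0 = -g(y) / b(y)`.
-/

open MeasureTheory Set Filter Topology Function

theorem integrableOn_Ioi_deriv_of_nonneg_of_le {g g' : ℝ → ℝ} {a C : ℝ}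
    (hcont : ContinuousWithinAt g (Ici a) a) (hderiv : ∀ t ∈ Ioi a, HasDerivAt g (g' t) t)
    (hg'pos : ∀ t ∈ Ioi a, 0 ≤ g' t) (hle : ∀ t ∈ Ici a, g t ≤ C) :
    IntegrableOn g' (Ioi a) := by
  have hcontOn : ContinuousOn g (Ici a) := fun t ht =>
    ht.out.eq_or_lt.elim (fun h => h ▸ hcont)
      fun h => (hderiv t h).continuousAt.continuousWithinAt
  have hmono : MonotoneOn g (Ici a) := by
    refine monotoneOn_of_deriv_nonneg (convex_Ici a) hcontOn ?_ ?_ <;> rw [interior_Ici]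
    · exact fun t ht => (hderiv t ht).differentiableAt.differentiableWithinAt
    · exact fun t ht => (hderiv t ht).deriv ▸ hg'pos t ht
  have hlim : Tendsto (fun t => g (max a t)) atTop (𝓝 (⨆ t, g (max a t))) :=
    tendsto_atTop_ciSup
      (fun s t hst => hmono (le_max_left a s) (le_max_left a t) (max_le_max le_rfl hst))
      ⟨C, forall_mem_range.2 fun t => hle _ (le_max_left a t)⟩
  refine integrableOn_Ioi_deriv_of_nonneg hcont hderiv hg'pos (hlim.congr' ?_)
  filter_upwards [eventually_ge_atTop a] with t ht
  rw [max_eq_right ht]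

theorem hasDerivWithinAt_integral_Ici {φ : ℝ → ℝ} {a t : ℝ} (hφ : ContinuousOn φ (Ici a))
    (ht : a ≤ t) : HasDerivWithinAt (fun u => ∫ s in a..u, φ s) (φ t) (Ici a) t := by
  rcases ht.eq_or_lt with rfl | ht
  · exact intervalIntegral.integral_hasDerivWithinAt_right (t := Ioi a) (by simp)
      ((hφ.mono Ioi_subset_Ici_self).stronglyMeasurableAtFilter_nhdsWithin measurableSet_Ioi a)
      ((hφ a self_mem_Ici).mono Ioi_subset_Ici_self)
  · refine (intervalIntegral.integral_hasDerivAt_right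
      (hφ.mono (uIcc_of_le ht.le ▸ Icc_subset_Ici_self)).intervalIntegrable
      ((hφ.mono Ioi_subset_Ici_self).stronglyMeasurableAtFilter isOpen_Ioi t ht)
      (hφ.continuousAt (Ici_mem_nhds ht))).hasDerivWithinAt

theorem exists_norm_le_mul_of_hasCompactSupport {X : Type*} [TopologicalSpace X] {φ f : X → ℝ}
    (hφ : Continuous φ) (hφc : HasCompactSupport φ) (hf : Continuous f)
    (hfpos : ∀ z, 0 < f z) :
    ∃ C, ∀ z, ‖φ z‖ ≤ C * f z := by
  obtain ⟨C, hC⟩ := (hφ.div hf fun z => (hfpos z).ne').bounded_above_of_compact_support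
    (hφc.mono ((support_div' φ f).trans_subset inter_subset_left))
  refine ⟨C, fun z => ?_⟩
  have := hC z
  rwa [Pi.div_apply, norm_div, Real.norm_of_nonneg (hfpos z).le, div_le_iff₀ (hfpos z)] at this

theorem continuous_div_of_tsupport_subset {X : Type*} [TopologicalSpace X] {g b : X → ℝ}
    (hg : Continuous g) (hb : Continuous b) (hgb : tsupport g ⊆ {z | b z ≠ 0}) :
    Continuous fun z => g z / b z :=
  continuous_of_tsupport fun _ hz =>
    hg.continuousAt.div hb.continuousAt
      (hgb (closure_mono (support_div g b ▸ inter_subset_left) hz))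

theorem integral_Ioi_deriv_eq_neg_of_integrableOn {F F' : ℝ → ℝ} {a : ℝ}
    (hcont : ContinuousWithinAt F (Ici a) a) (hderiv : ∀ t ∈ Ioi a, HasDerivAt F (F' t) t)
    (hF' : IntegrableOn F' (Ioi a)) (hF : IntegrableOn F (Ioi a)) :
    ∫ t in Ioi a, F' t = -F a := by
  simpa using integral_Ioi_of_hasDerivAt_of_tendsto hcont hderiv hF'
    (tendsto_zero_of_hasDerivAt_of_integrableOn_Ioi hderiv hF' hF)

/-- The paper's `e(y,t)` for the trajectory `x = fun t => γ t y`. -/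
noncomputable def survival (f x : ℝ → ℝ) (t : ℝ) : ℝ :=
  Real.exp (-∫ s in (0 : ℝ)..t, f (x s))

section survival

variable {f x : ℝ → ℝ} {t : ℝ}

@[simp] theorem survival_zero : survival f x 0 = 1 := by
  simp [survival]

theorem survival_pos : 0 < survival f x t :=
  Real.exp_pos _

theorem hasDerivWithinAt_survival (hf : Continuous f) (hx : ContinuousOn x (Ici 0))
    (ht : 0 ≤ t) :
    HasDerivWithinAt (survival f x) (survival f x t * -f (x t)) (Ici 0) t :=
  (hasDerivWithinAt_integral_Ici (hf.comp_continuousOn hx) ht).neg.exp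

theorem hasDerivAt_survival (hf : Continuous f) (hx : ContinuousOn x (Ici 0)) (ht : 0 < t) :
    HasDerivAt (survival f x) (survival f x t * -f (x t)) t :=
  (hasDerivWithinAt_survival hf hx ht.le).hasDerivAt (Ici_mem_nhds ht)

theorem integrableOn_rate_mul_survival (hf : Continuous f) (hx : ContinuousOn x (Ici 0))
    (hfnn : ∀ z, 0 ≤ f z) :
    IntegrableOn (fun t => f (x t) * survival f x t) (Ioi 0) := by
  refine integrableOn_Ioi_deriv_of_nonneg_of_le (g := fun t => -survival f x t) (C := 0)
    (hasDerivWithinAt_survival hf hx le_rfl).neg.continuousWithinAt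
    (fun t ht => (hasDerivAt_survival hf hx ht).neg.congr_deriv (by ring))
    (fun t _ => mul_nonneg (hfnn _) survival_pos.le) (fun t _ => neg_nonpos.2 survival_pos.le)

theorem integrableOn_survival_mul_comp (hf : Continuous f) (hx : ContinuousOn x (Ici 0))
    (hfpos : ∀ z, 0 < f z) {φ : ℝ → ℝ} (hφ : Continuous φ)
    (hφc : HasCompactSupport φ) :
    IntegrableOn (fun t => survival f x t * φ (x t)) (Ioi 0) := by
  obtain ⟨C, hC⟩ := exists_norm_le_mul_of_hasCompactSupport hφ hφc hf hfpos
  have hcont : ContinuousOn (fun t => survival f x t * φ (x t)) (Ioi 0) :=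
    fun t ht => ((hasDerivAt_survival hf hx ht).continuousAt.continuousWithinAt).mul
      ((hφ.comp_continuousOn hx t (Ioi_subset_Ici_self ht)).mono Ioi_subset_Ici_self)
  refine ((integrableOn_rate_mul_survival hf hx fun z => (hfpos z).le).const_mul C).mono'
    (hcont.aestronglyMeasurable measurableSet_Ioi) (ae_of_all _ fun t => ?_)
  calc ‖survival f x t * φ (x t)‖ = survival f x t * ‖φ (x t)‖ := by
        rw [norm_mul, Real.norm_of_nonneg survival_pos.le]
    _ ≤ survival f x t * (C * f (x t)) := by gcongr; exacts [survival_pos.le, hC _]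
    _ = C * (f (x t) * survival f x t) := by ring

end survival

theorem hasDerivAt_div_comp_of_hasDerivAt {b g x : ℝ → ℝ} {t : ℝ}
    (hb : Differentiable ℝ b) (hg : Differentiable ℝ g) (hgb : tsupport g ⊆ {z | b z ≠ 0})
    (hx : HasDerivAt x (b (x t)) t) :
    HasDerivAt (fun s => g (x s) / b (x s))
      (deriv g (x t) - deriv b (x t) * (g (x t) / b (x t))) t := by
  by_cases hxt : x t ∈ tsupport g
  · have hbx : b (x t) ≠ 0 := hgb hxt
    refine (((hg _).hasDerivAt.comp t hx).div ((hb _).hasDerivAt.comp t hx) hbx).congr_deriv ?_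
    simp only [comp_apply]
    field_simp
  · have hzero : (fun s => g (x s) / b (x s)) =ᶠ[𝓝 t] fun _ => 0 := by
      filter_upwards [hx.continuousAt.eventually
        ((notMem_tsupport_iff_eventuallyEq.1 hxt).eventually)] with s hs
      simp [hs]
    have hg' : deriv g (x t) = 0 := notMem_support.1 fun h => hxt (support_deriv_subset h)
    rw [hg', image_eq_zero_of_notMem_tsupport hxt]
    simpa using (hasDerivAt_const t (0 : ℝ)).congr_of_eventuallyEq hzero

theorem jump_time_integration_by_parts_general
    (b : ℝ → ℝ)
    (hb : ContDiff ℝ 1 b)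
    (γ : ℝ → ℝ → ℝ)
    (hγ0 : ∀ x : ℝ, γ 0 x = x)
    (hγ : ∀ (x t : ℝ), 0 ≤ t → HasDerivAt (fun s => γ s x) (b (γ t x)) t)
    (f : ℝ → ℝ) (hfpos : ∀ x, 0 < f x) (hfLip : ∃ L : NNReal, LipschitzWith L f)
    (ε : ℝ) (hε : 0 < ε)
    (g : ℝ → ℝ) (hg : ContDiff ℝ (⊤ : ℕ∞) g) (hgc : HasCompactSupport g)
    (hsupp : tsupport g ⊆ {x : ℝ | ε ≤ |b x|}) :
    ∀ y : ℝ,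
      IntegrableOn
        (fun t => Real.exp (-∫ s in (0:ℝ)..t, f (γ s y)) * deriv g (γ t y))
        (Ioi 0) ∧
      IntegrableOn
        (fun t => Real.exp (-∫ s in (0:ℝ)..t, f (γ s y)) *
          ((f (γ t y) + deriv b (γ t y)) / b (γ t y)) * g (γ t y))
        (Ioi 0) ∧
      (∫ t in Ioi (0:ℝ),
          Real.exp (-∫ s in (0:ℝ)..t, f (γ s y)) * deriv g (γ t y))
        = -(g y / b y) +
          ∫ t in Ioi (0:ℝ),
            Real.exp (-∫ s in (0:ℝ)..t, f (γ s y)) *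
              ((f (γ t y) + deriv b (γ t y)) / b (γ t y)) * g (γ t y) := by
  intro y
  set x := fun t => γ t y
  have hx : ∀ t, 0 ≤ t → HasDerivAt x (b (x t)) t := hγ y
  have hxc : ContinuousOn x (Ici 0) := fun t ht => (hx t ht).continuousAt.continuousWithinAt
  have hfc : Continuous f := hfLip.choose_spec.continuous
  have hbd : Differentiable ℝ b := hb.differentiable one_ne_zero
  have hgd : Differentiable ℝ g := hg.differentiable (by simp)
  have hgb : tsupport g ⊆ {z | b z ≠ 0} := fun z hz => abs_pos.1 (hε.trans_le (hsupp hz))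
  have hq : Continuous fun z => g z / b z :=
    continuous_div_of_tsupport_subset hg.continuous hbd.continuous hgb
  have hqc : HasCompactSupport fun z => g z / b z :=
    hgc.mono ((support_div g b).trans_subset inter_subset_left)
  have hI₁ :=
    integrableOn_survival_mul_comp hfc hxc hfpos (hg.continuous_deriv (by simp)) hgc.deriv
  have hI₂ := integrableOn_survival_mul_comp hfc hxc hfpos
    (φ := fun z => (f z + deriv b z) * (g z / b z))
    ((hfc.add (hb.continuous_deriv le_rfl)).mul hq) hqc.mul_left
  set F := fun t => survival f x t * (g (x t) / b (x t))
  have hF : ∀ t ∈ Ioi 0, HasDerivAt F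
      (survival f x t * deriv g (x t) -
        survival f x t * ((f (x t) + deriv b (x t)) * (g (x t) / b (x t)))) t := fun t ht =>
    ((hasDerivAt_survival hfc hxc ht).mul
      (hasDerivAt_div_comp_of_hasDerivAt hbd hgd hgb (hx t ht.out.le))).congr_deriv (by ring)
  have hF0 : ContinuousWithinAt F (Ici 0) 0 :=
    (hasDerivWithinAt_survival hfc hxc le_rfl).continuousWithinAt.mul
      (hasDerivAt_div_comp_of_hasDerivAt hbd hgd hgb (hx 0 le_rfl)).continuousAt.continuousWithinAt
  have hIBP := integral_Ioi_deriv_eq_neg_of_integrableOn hF0 hF (hI₁.sub hI₂)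
    (integrableOn_survival_mul_comp hfc hxc hfpos hq hqc)
  rw [integral_sub hI₁ hI₂] at hIBP
  simp only [mul_assoc, div_mul_eq_mul_div, mul_div_assoc]
  refine ⟨hI₁, hI₂, ?_⟩
  simp only [F, x, hγ0, survival_zero, one_mul] at hIBP
  exact sub_eq_iff_eq_add.mp hIBP

/-- Integration by parts in the jump time. For `g` smooth with compact support
contained in `{|b| ≥ ε}`, and `e (y,t) = exp (-∫_0^t f (γ s y) ds)`, both integrals below
converge absolutely and
`∫_0^∞ e(y,t) g'(γ_t(y)) dt
  = -g(y)/b(y) + ∫_0^∞ e(y,t) ((f(γ_t(y)) + b'(γ_t(y)))/b(γ_t(y))) g(γ_t(y)) dt`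
(with the convention `z/0 = 0`, which is Lean's default). -/
theorem jump_time_integration_by_parts
    (B : ℝ) (hB : 0 < B) (b : ℝ → ℝ)
    (hb : ContDiff ℝ 1 b) (hb' : ∀ v : ℝ, |deriv b v| ≤ B)
    (γ : ℝ → ℝ → ℝ)
    (hγ0 : ∀ x : ℝ, γ 0 x = x)
    (hγ : ∀ (x t : ℝ), 0 ≤ t → HasDerivAt (fun s => γ s x) (b (γ t x)) t)
    (f : ℝ → ℝ) (hfpos : ∀ x, 0 < f x) (hfLip : ∃ L : NNReal, LipschitzWith L f)
    (hfdiv : ∀ x : ℝ, (∫⁻ s in Ioi (0:ℝ), ENNReal.ofReal (f (γ s x))) = ⊤)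
    (ε : ℝ) (hε : 0 < ε)
    (g : ℝ → ℝ) (hg : ContDiff ℝ (⊤ : ℕ∞) g) (hgc : HasCompactSupport g)
    (hsupp : tsupport g ⊆ {x : ℝ | ε ≤ |b x|}) :
    ∀ y : ℝ,
      IntegrableOn
        (fun t => Real.exp (-∫ s in (0:ℝ)..t, f (γ s y)) * deriv g (γ t y))
        (Ioi 0) ∧
      IntegrableOn
        (fun t => Real.exp (-∫ s in (0:ℝ)..t, f (γ s y)) *
          ((f (γ t y) + deriv b (γ t y)) / b (γ t y)) * g (γ t y))
        (Ioi 0) ∧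
      (∫ t in Ioi (0:ℝ),
          Real.exp (-∫ s in (0:ℝ)..t, f (γ s y)) * deriv g (γ t y))
        = -(g y / b y) +
          ∫ t in Ioi (0:ℝ),
            Real.exp (-∫ s in (0:ℝ)..t, f (γ s y)) *
              ((f (γ t y) + deriv b (γ t y)) / b (γ t y)) * g (γ t y) :=
  jump_time_integration_by_parts_general b hb γ hγ0 hγ f hfpos hfLip ε hε g hg hgc hsupp
end

section
/- For every ε > 0 and every g ∈ C_c^∞(ℝ) with supp g ⊆ {x ∈ ℝ : |b(x)| ≥ ε}, one has |∫ g' dm| ≤ (1/ε) · (∫ f dm + sup_{x ∈ supp g}(f(x) + |b'(x)|)) · ‖g‖_∞. -/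
/-!
Put `u = g / b`, a `C¹` function with compact support since `b` does not vanish on the support
of `g`. Then `g' = g (b' + f) / b + (b u' - f u)`, and the first term is bounded pointwise by
`‖g‖_∞ sup_{supp g} (f + |b'|) / ε`. Along a trajectory, `t ↦ e(y,t) u(γ_t y)` has derivative
`e(y,t) (b u' - f u)(γ_t y)` and tends to `0` because `∫_0^∞ f(γ_s y) ds = ∞`; so the
representation identity turns `∫ (b u' - f u) dm` into `-∫ f(x) u(Δ x) m(dx)`, which is at most
`‖g‖_∞ / ε · ∫ f dm`.
-/

open MeasureTheory Set Filter Topology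

theorem tendsto_intervalIntegral_atTop_of_lintegral_Ioi_eq_top {ρ : ℝ → ℝ} {a : ℝ}
    (hρ : ContinuousOn ρ (Ici a)) (hρ0 : ∀ t ∈ Ioi a, 0 ≤ ρ t)
    (htop : ∫⁻ t in Ioi a, ENNReal.ofReal (ρ t) = ⊤) :
    Tendsto (fun T => ∫ t in a..T, ρ t) atTop atTop := by
  rw [← ENNReal.tendsto_ofReal_nhds_top, ← htop]
  have hmeas : AEMeasurable (fun t => ENNReal.ofReal (ρ t)) (volume.restrict (Ioi a)) :=
    ((hρ.mono Ioi_subset_Ici_self).aemeasurable measurableSet_Ioi).ennreal_ofReal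
  refine ((aecover_Iic tendsto_id).lintegral_tendsto_of_countably_generated hmeas).congr' ?_
  filter_upwards [eventually_ge_atTop a] with T hT
  rw [id_eq, Measure.restrict_restrict measurableSet_Iic, Iic_inter_Ioi,
    intervalIntegral.integral_of_le hT, ofReal_integral_eq_lintegral_ofReal]
  · exact ((hρ.mono Icc_subset_Ici_self).integrableOn_compact (μ := volume)
      isCompact_Icc).mono_set Ioc_subset_Icc_self
  · exact ae_restrict_of_forall_mem measurableSet_Ioc fun t ht => hρ0 t ht.1

theorem integral_Ioi_exp_neg_primitive_mul_sub {ρ v v' : ℝ → ℝ} {a C K : ℝ}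
    (hρ : ContinuousOn ρ (Ici a)) (hρ0 : ∀ t ∈ Ioi a, 0 ≤ ρ t)
    (htop : ∫⁻ t in Ioi a, ENNReal.ofReal (ρ t) = ⊤)
    (hv : ContinuousWithinAt v (Ici a) a) (hv' : ∀ t ∈ Ioi a, HasDerivAt v (v' t) t)
    (hvC : ∀ t ∈ Ioi a, |v t| ≤ C) (hK : ∀ t ∈ Ioi a, |v' t - ρ t * v t| ≤ K * ρ t) :
    ∫ t in Ioi a, Real.exp (-∫ s in a..t, ρ s) * (v' t - ρ t * v t) = -v a := by
  set E : ℝ → ℝ := fun t => Real.exp (-∫ s in a..t, ρ s)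
  have hE_cont : ContinuousWithinAt E (Ici a) a :=
    (intervalIntegral.integral_hasDerivWithinAt_right IntervalIntegrable.refl
      ((hρ.mono Ioi_subset_Ici_self).stronglyMeasurableAtFilter_nhdsWithin measurableSet_Ioi a)
      ((hρ a self_mem_Ici).mono Ioi_subset_Ici_self)).continuousWithinAt.neg.rexp
  have hE' : ∀ t ∈ Ioi a, HasDerivAt E (-ρ t * E t) t := by
    intro t ht
    have hF : HasDerivAt (fun T => ∫ s in a..T, ρ s) (ρ t) t :=
      intervalIntegral.integral_hasDerivAt_right
        ((hρ.mono Icc_subset_Ici_self).intervalIntegrable_of_Icc (le_of_lt ht))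
        ((hρ.mono Ioi_subset_Ici_self).stronglyMeasurableAtFilter isOpen_Ioi t ht)
        (hρ.continuousAt (Ici_mem_nhds ht))
    exact hF.neg.exp.congr_deriv (mul_comm _ _)
  have hE_lim : Tendsto E atTop (𝓝 0) :=
    Real.tendsto_exp_atBot.comp (tendsto_neg_atTop_atBot.comp
      (tendsto_intervalIntegral_atTop_of_lintegral_Ioi_eq_top hρ hρ0 htop))
  have hρE_int : IntegrableOn (fun t => ρ t * E t) (Ioi a) := by
    refine integrableOn_Ioi_deriv_of_nonneg (g := -E) hE_cont.neg
      (fun t ht => (hE' t ht).neg.congr_deriv (by ring))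
      (fun t ht => mul_nonneg (hρ0 t ht) (Real.exp_pos _).le) hE_lim.neg
  have hderiv : ∀ t ∈ Ioi a,
      HasDerivAt (fun t => E t * v t) (E t * (v' t - ρ t * v t)) t := fun t ht =>
    ((hE' t ht).mul (hv' t ht)).congr_deriv (by ring)
  have hint : IntegrableOn (fun t => E t * (v' t - ρ t * v t)) (Ioi a) := by
    refine Integrable.mono' (hρE_int.const_mul K) ?_ ?_
    · refine (measurable_deriv fun t => E t * v t).aestronglyMeasurable.congr ?_
      exact ae_restrict_of_forall_mem measurableSet_Ioi fun t ht => (hderiv t ht).deriv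
    · refine ae_restrict_of_forall_mem measurableSet_Ioi fun t ht => ?_
      rw [Real.norm_eq_abs, abs_mul, abs_of_pos (Real.exp_pos _)]
      calc E t * |v' t - ρ t * v t| ≤ E t * (K * ρ t) :=
            mul_le_mul_of_nonneg_left (hK t ht) (Real.exp_pos _).le
        _ = K * (ρ t * E t) := by ring
  have hlim : Tendsto (fun t => E t * v t) atTop (𝓝 0) :=
    hE_lim.zero_mul_isBoundedUnder_le
      ⟨C, eventually_map.2 ((eventually_gt_atTop a).mono fun t ht => hvC t ht)⟩
  rw [integral_Ioi_of_hasDerivAt_of_tendsto (hE_cont.mul hv) hderiv hint hlim]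
  simp [E]

theorem IsCompact.le_ciSup₂ {X α : Type*} [TopologicalSpace X] [ConditionallyCompleteLinearOrder α]
    [TopologicalSpace α] [ClosedIciTopology α] {K : Set X} {F : X → α} (hK : IsCompact K)
    (hF : ContinuousOn F K) {x : X} (hx : x ∈ K) : F x ≤ ⨆ y ∈ K, F y := by
  refine _root_.le_ciSup₂ (f := fun y (_ : y ∈ K) => F y) ((hK.bddAbove_image hF).mono ?_) x hx
  simp only [iUnion_subset_iff, range_subset_iff]
  exact fun y hy => mem_image_of_mem F hy

theorem HasCompactSupport.exists_abs_le_mul {X : Type*} [TopologicalSpace X] {h f : X → ℝ}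
    (hcs : HasCompactSupport h) (hh : Continuous h) (hf : Continuous f) (hfpos : ∀ x, 0 < f x) :
    ∃ K, ∀ x, |h x| ≤ K * f x := by
  obtain ⟨K, hK⟩ := (hcs.mul_right (f' := fun x => (f x)⁻¹)).exists_bound_of_continuous
    (hh.mul (hf.inv₀ fun x => (hfpos x).ne'))
  refine ⟨K, fun x => ?_⟩
  have hx := hK x
  rw [Real.norm_eq_abs, Pi.mul_apply, abs_mul, abs_inv, abs_of_pos (hfpos x)] at hx
  rwa [← div_le_iff₀ (hfpos x)]

theorem abs_div_le_of_tsupport_subset {X : Type*} [TopologicalSpace X] {g b : X → ℝ} {M ε : ℝ}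
    (hε : 0 < ε) (hM : 0 ≤ M) (hgM : ∀ x ∈ tsupport g, |g x| ≤ M)
    (hsupp : tsupport g ⊆ {x | ε ≤ |b x|}) (x : X) : |g x / b x| ≤ M / ε := by
  by_cases hx : x ∈ tsupport g
  · rw [abs_div]
    exact div_le_div₀ hM (hgM x hx) hε (hsupp hx)
  · rw [image_eq_zero_of_notMem_tsupport hx, zero_div, abs_zero]
    exact div_nonneg hM hε.le

theorem contDiff_div_of_tsupport {𝕜 E : Type*} [NontriviallyNormedField 𝕜] [NormedAddCommGroup E]
    [NormedSpace 𝕜 E] {g b : E → 𝕜} {n : WithTop ℕ∞} (hg : ContDiff 𝕜 n g) (hb : ContDiff 𝕜 n b)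
    (hne : ∀ x ∈ tsupport g, b x ≠ 0) : ContDiff 𝕜 n (fun x => g x / b x) := by
  refine contDiff_iff_contDiffAt.2 fun x => ?_
  by_cases hx : x ∈ tsupport g
  · exact hg.contDiffAt.div hb.contDiffAt (hne x hx)
  · refine (contDiffAt_const (c := (0 : 𝕜))).congr_of_eventuallyEq ?_
    filter_upwards [notMem_tsupport_iff_eventuallyEq.1 hx] with y hy
    simp [hy]

theorem HasCompactSupport.div_right {X G₀ : Type*} [TopologicalSpace X] [GroupWithZero G₀]
    {g : X → G₀} (hg : HasCompactSupport g) (b : X → G₀) :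
    HasCompactSupport (fun x => g x / b x) :=
  hg.mono' ((Function.support_div g b).trans_subset (inter_subset_left.trans (subset_tsupport g)))

/-- The generator of the flow of `b` killed at rate `f`. -/
noncomputable def killedGenerator (b f u : ℝ → ℝ) (x : ℝ) : ℝ :=
  deriv u x * b x - f x * u x

theorem continuous_killedGenerator {b f u : ℝ → ℝ} (hb : Continuous b) (hf : Continuous f)
    (hu : ContDiff ℝ 1 u) : Continuous (killedGenerator b f u) :=
  ((hu.continuous_deriv le_rfl).mul hb).sub (hf.mul hu.continuous)

theorem HasCompactSupport.killedGenerator {u : ℝ → ℝ} (b f : ℝ → ℝ) (hu : HasCompactSupport u) :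
    HasCompactSupport (killedGenerator b f u) :=
  hu.deriv.mul_right.sub hu.mul_left

theorem deriv_sub_killedGenerator_div {g b : ℝ → ℝ} (f : ℝ → ℝ) (hg : Differentiable ℝ g)
    (hb : Differentiable ℝ b) (hne : ∀ x ∈ tsupport g, b x ≠ 0) (x : ℝ) :
    deriv g x - killedGenerator b f (fun y => g y / b y) x = g x * (deriv b x + f x) / b x := by
  by_cases hx : x ∈ tsupport g
  · have hbx := hne x hx
    rw [killedGenerator, deriv_fun_div (hg x) (hb x) hbx]
    field_simp
    ring
  · have hu : (fun y => g y / b y) =ᶠ[𝓝 x] 0 := by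
      filter_upwards [notMem_tsupport_iff_eventuallyEq.1 hx] with y hy
      simp [hy]
    have hg' : deriv g x = 0 :=
      Function.notMem_support.1 fun h => hx (support_deriv_subset h)
    simp [killedGenerator, hu.deriv_eq, hg', image_eq_zero_of_notMem_tsupport hx]

theorem integral_Ioi_exp_neg_mul_killedGenerator_comp_flow {b f u : ℝ → ℝ} {γ : ℝ → ℝ → ℝ}
    {y C K : ℝ} (hγ0 : γ 0 y = y) (hγ : ∀ t, 0 ≤ t → HasDerivAt (fun s => γ s y) (b (γ t y)) t)
    (hf : Continuous f) (hf0 : ∀ x, 0 ≤ f x)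
    (hdiv : ∫⁻ s in Ioi (0:ℝ), ENNReal.ofReal (f (γ s y)) = ⊤)
    (hu : Differentiable ℝ u) (huC : ∀ x, |u x| ≤ C)
    (hK : ∀ x, |killedGenerator b f u x| ≤ K * f x) :
    ∫ t in Ioi (0:ℝ), Real.exp (-∫ s in (0:ℝ)..t, f (γ s y)) * killedGenerator b f u (γ t y)
      = -u y := by
  have hv' : ∀ t ∈ Ioi (0:ℝ), HasDerivAt (fun s => u (γ s y))
      (deriv u (γ t y) * b (γ t y)) t := fun t ht =>
    (hu (γ t y)).hasDerivAt.comp t (hγ t (le_of_lt ht))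
  simpa only [hγ0, killedGenerator] using
    integral_Ioi_exp_neg_primitive_mul_sub (ρ := fun t => f (γ t y)) (v := fun t => u (γ t y))
      (fun t ht => (hf.continuousAt.comp (hγ t ht).continuousAt).continuousWithinAt)
      (fun t _ => hf0 _) hdiv
      (hu.continuous.continuousAt.comp (hγ 0 le_rfl).continuousAt).continuousWithinAt hv'
      (fun t _ => huC _) (fun t _ => hK _)

theorem abs_integral_killedGenerator_le {b f u a : ℝ → ℝ} {γ : ℝ → ℝ → ℝ} {m : Measure ℝ}
    {C : ℝ} (hγ0 : ∀ x, γ 0 x = x)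
    (hγ : ∀ x t, 0 ≤ t → HasDerivAt (fun s => γ s x) (b (γ t x)) t)
    (hf : Continuous f) (hfpos : ∀ x, 0 < f x)
    (hdiv : ∀ x, ∫⁻ s in Ioi (0:ℝ), ENNReal.ofReal (f (γ s x)) = ⊤) (hfint : Integrable f m)
    (hrep : ∀ g : ℝ → ℝ, Measurable g → (∃ C, ∀ x, |g x| ≤ C) →
      ∫ x, g x ∂m
        = ∫ x, (f x *
            ∫ t in Ioi (0:ℝ),
              Real.exp (-∫ s in (0:ℝ)..t, f (γ s (x + a x))) * g (γ t (x + a x))) ∂m)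
    (hb : Continuous b) (hu : ContDiff ℝ 1 u) (hcs : HasCompactSupport u)
    (huC : ∀ x, |u x| ≤ C) :
    |∫ x, killedGenerator b f u x ∂m| ≤ C * ∫ x, f x ∂m := by
  have hL := continuous_killedGenerator hb hf hu
  have hLcs := hcs.killedGenerator b f
  obtain ⟨K, hK⟩ := hLcs.exists_abs_le_mul hL hf hfpos
  obtain ⟨CL, hCL⟩ := hLcs.exists_bound_of_continuous hL
  rw [hrep _ hL.measurable ⟨CL, hCL⟩]
  simp_rw [integral_Ioi_exp_neg_mul_killedGenerator_comp_flow (hγ0 _) (hγ _) hf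
    (fun x => (hfpos x).le) (hdiv _) (hu.differentiable one_ne_zero) huC hK]
  rw [← integral_const_mul, ← Real.norm_eq_abs]
  refine norm_integral_le_of_norm_le (hfint.const_mul C) (ae_of_all _ fun x => ?_)
  rw [Real.norm_eq_abs, abs_mul, abs_neg, abs_of_pos (hfpos x), mul_comm]
  exact mul_le_mul_of_nonneg_right (huC _) (hfpos x).le

theorem integral_deriv_eq_add_integral_killedGenerator_div {b f g : ℝ → ℝ} {m : Measure ℝ}
    [IsFiniteMeasure m] (hb : ContDiff ℝ 1 b) (hf : Continuous f) (hg : ContDiff ℝ 1 g)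
    (hgc : HasCompactSupport g) (hne : ∀ x ∈ tsupport g, b x ≠ 0) :
    ∫ x, deriv g x ∂m = ∫ x, g x * (deriv b x + f x) / b x ∂m
      + ∫ x, killedGenerator b f (fun y => g y / b y) x ∂m := by
  simp_rw [← deriv_sub_killedGenerator_div f (hg.differentiable one_ne_zero)
    (hb.differentiable one_ne_zero) hne]
  rw [integral_sub ((hg.continuous_deriv le_rfl).integrable_of_hasCompactSupport hgc.deriv)
    ((continuous_killedGenerator hb.continuous hf (contDiff_div_of_tsupport hg hb hne)
      ).integrable_of_hasCompactSupport ((hgc.div_right b).killedGenerator b f)), sub_add_cancel]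

theorem abs_integral_mul_div_le {X : Type*} [MeasurableSpace X] [TopologicalSpace X]
    {m : Measure X} [IsProbabilityMeasure m] {g c b : X → ℝ} {M S ε : ℝ} (hε : 0 < ε)
    (hM : 0 ≤ M) (hS : 0 ≤ S) (hgM : ∀ x, |g x| ≤ M) (hcS : ∀ x ∈ tsupport g, |c x| ≤ S)
    (hsupp : tsupport g ⊆ {x | ε ≤ |b x|}) :
    |∫ x, g x * c x / b x ∂m| ≤ M * S / ε := by
  have hbound : ∀ x, |g x * c x / b x| ≤ M * S / ε := by
    refine abs_div_le_of_tsupport_subset hε (mul_nonneg hM hS) (fun x hx => ?_)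
      (tsupport_mul_subset_left.trans hsupp)
    rw [abs_mul]
    exact mul_le_mul (hgM x) (hcS x (tsupport_mul_subset_left hx)) (abs_nonneg _) hM
  simpa using norm_integral_le_of_norm_le_const (μ := m)
    (ae_of_all _ fun x => (Real.norm_eq_abs _).trans_le (hbound x))

theorem invariant_measure_derivative_bound_general
    (b : ℝ → ℝ)
    (hb : ContDiff ℝ 1 b)
    (γ : ℝ → ℝ → ℝ)
    (hγ0 : ∀ x : ℝ, γ 0 x = x)
    (hγ : ∀ (x t : ℝ), 0 ≤ t → HasDerivAt (fun s => γ s x) (b (γ t x)) t)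
    (f : ℝ → ℝ) (hfpos : ∀ x, 0 < f x) (hfLip : ∃ L : NNReal, LipschitzWith L f)
    (hfdiv : ∀ x : ℝ, (∫⁻ s in Ioi (0:ℝ), ENNReal.ofReal (f (γ s x))) = ⊤)
    (a : ℝ → ℝ)
    (m : Measure ℝ) [IsProbabilityMeasure m] (hfint : Integrable f m)
    (hrep : ∀ g : ℝ → ℝ, Measurable g → (∃ C, ∀ x, |g x| ≤ C) →
      ∫ x, g x ∂m
        = ∫ x, (f x *
            ∫ t in Ioi (0:ℝ),
              Real.exp (-∫ s in (0:ℝ)..t, f (γ s (x + a x))) * g (γ t (x + a x))) ∂m)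
    (ε : ℝ) (hε : 0 < ε)
    (g : ℝ → ℝ) (hg : ContDiff ℝ (⊤ : ℕ∞) g) (hgc : HasCompactSupport g)
    (hsupp : tsupport g ⊆ {x : ℝ | ε ≤ |b x|}) :
    |∫ x, deriv g x ∂m|
      ≤ (1 / ε) * ((∫ x, f x ∂m) + ⨆ x ∈ tsupport g, (f x + |deriv b x|)) *
          (⨆ x : ℝ, |g x|) := by
  obtain ⟨L, hfL⟩ := hfLip
  have hf : Continuous f := hfL.continuous
  have hg1 : ContDiff ℝ 1 g := hg.of_le (by exact_mod_cast le_top)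
  have hne : ∀ x ∈ tsupport g, b x ≠ 0 := fun x hx => abs_pos.1 (hε.trans_le (hsupp hx))
  set M := ⨆ x, |g x|
  set S := ⨆ x ∈ tsupport g, (f x + |deriv b x|)
  have hgM : ∀ x, |g x| ≤ M :=
    le_ciSup (hg1.continuous.abs.bddAbove_range_of_hasCompactSupport hgc.abs)
  have hM : 0 ≤ M := Real.iSup_nonneg fun x => abs_nonneg _
  have hS : 0 ≤ S := Real.iSup_nonneg fun x => Real.iSup_nonneg fun _ =>
    add_nonneg (hfpos x).le (abs_nonneg _)
  have hbfS : ∀ x ∈ tsupport g, |deriv b x + f x| ≤ S := by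
    intro x hx
    refine (abs_add_le _ _).trans ?_
    rw [abs_of_pos (hfpos x), add_comm]
    exact hgc.le_ciSup₂ (hf.add (hb.continuous_deriv le_rfl).abs).continuousOn hx
  rw [integral_deriv_eq_add_integral_killedGenerator_div hb hf hg1 hgc hne]
  calc _ ≤ |∫ x, g x * (deriv b x + f x) / b x ∂m|
        + |∫ x, killedGenerator b f (fun y => g y / b y) x ∂m| := abs_add_le _ _
    _ ≤ M * S / ε + M / ε * ∫ x, f x ∂m :=
      add_le_add (abs_integral_mul_div_le hε hM hS hgM hbfS hsupp)
        (abs_integral_killedGenerator_le hγ0 hγ hf hfpos hfdiv hfint hrep hb.continuous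
          (contDiff_div_of_tsupport hg1 hb hne) (hgc.div_right b)
          (abs_div_le_of_tsupport_subset hε hM (fun x _ => hgM x) hsupp))
    _ = 1 / ε * ((∫ x, f x ∂m) + S) * M := by ring

/-- For every `ε > 0` and every `g ∈ C_c^∞(ℝ)` supported in `{|b| ≥ ε}`,
`|∫ g' dm| ≤ (1/ε) (∫ f dm + sup_{x ∈ supp g} (f x + |b' x|)) ‖g‖_∞`,
where `m` is a probability measure satisfying the representation identity of the
invariant measure of the one-dimensional PDMP. -/
theorem invariant_measure_derivative_bound
    (B : ℝ) (hB : 0 < B) (b : ℝ → ℝ)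
    (hb : ContDiff ℝ 1 b) (hb' : ∀ v : ℝ, |deriv b v| ≤ B)
    (γ : ℝ → ℝ → ℝ)
    (hγ0 : ∀ x : ℝ, γ 0 x = x)
    (hγ : ∀ (x t : ℝ), 0 ≤ t → HasDerivAt (fun s => γ s x) (b (γ t x)) t)
    (f : ℝ → ℝ) (hfpos : ∀ x, 0 < f x) (hfLip : ∃ L : NNReal, LipschitzWith L f)
    (hfdiv : ∀ x : ℝ, (∫⁻ s in Ioi (0:ℝ), ENNReal.ofReal (f (γ s x))) = ⊤)
    (a : ℝ → ℝ) (ha : Measurable a)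
    (m : Measure ℝ) [IsProbabilityMeasure m] (hfint : Integrable f m)
    (hrep : ∀ g : ℝ → ℝ, Measurable g → (∃ C, ∀ x, |g x| ≤ C) →
      ∫ x, g x ∂m
        = ∫ x, (f x *
            ∫ t in Ioi (0:ℝ),
              Real.exp (-∫ s in (0:ℝ)..t, f (γ s (x + a x))) * g (γ t (x + a x))) ∂m)
    (ε : ℝ) (hε : 0 < ε)
    (g : ℝ → ℝ) (hg : ContDiff ℝ (⊤ : ℕ∞) g) (hgc : HasCompactSupport g)
    (hsupp : tsupport g ⊆ {x : ℝ | ε ≤ |b x|}) :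
    |∫ x, deriv g x ∂m|
      ≤ (1 / ε) * ((∫ x, f x ∂m) + ⨆ x ∈ tsupport g, (f x + |deriv b x|)) *
          (⨆ x : ℝ, |g x|) :=
  invariant_measure_derivative_bound_general b hb γ hγ0 hγ f hfpos hfLip hfdiv a m hfint hrep ε hε g
    hg hgc hsupp
end

section
/- For every n ≥ 0, every choice of indices i_0,…,i_n ∈ {1,…,N}, every ε > 0, every x ∈ ℝ^N and every Borel set B ⊆ ℝ^N, the (n+1)-fold iterate of the jump-chain kernel satisfies K^{n+1}(x, B) ≥ (f_{i_0}(x)/f̄(x)) ∫_0^ε ⋯ ∫_0^ε (∏_{k=1}^n [e(x_{k−1}, t_k) f_{i_k}(γ_{t_k}(x_{k−1}))]) · f̄(γ_{t_{n+1}}(x_n)) e(x_n, t_{n+1}) · 1_B(η(t_1,…,t_{n+1})) dt_1 ⋯ dt_{n+1}, where x_0 = Δ_{i_0}(x), x_k = Δ_{i_k}(γ_{t_k}(x_{k−1})) for 1 ≤ k ≤ n, and η(t_1,…,t_{n+1}) = γ_{t_{n+1}}(x_n). -/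
/-!
Conditioning on the first jump, `K^{n+1}(x, B) = ∫ K^n(w, B) K(x, dw)`, and `K(x, ·)` dominates
`f_{i_0}(x) / f̄(x)` times the law of `γ_τ(Δ_{i_0} x)`, where `τ` has density
`f̄(γ_t z) e(z, t)` on `(0, ∞)`. Writing `e(z, t) f_{i_1}(γ_t z)` as that density times
`f_{i_1}/f̄ (γ_t z)` exhibits the integrand of the `(n+1)`-fold bound as the one-jump density
times the integrand of the `n`-fold bound started at `γ_t z`, so the bound follows by induction
on `n`, restricting `(0, ∞)` to `(0, ε]`. Tonelli is only needed as the inequality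
`∫⁻ over a product ≤ iterated ∫⁻`, which holds without any measurability of the integrand.
-/

open MeasureTheory Set ProbabilityTheory

noncomputable section

/-- `pdmpChain γ Δ x t k = x_k` where `x_0 = Δ_{i_0}(x)` and
`x_{k} = Δ_{i_k}(γ_{t_k}(x_{k-1}))`; here `Δ k` stands for `Δ_{i_k}` and the time vector is
0-indexed, i.e. `t k` stands for `t_{k+1}`. -/
def pdmpChain {E : Type*} (γ : ℝ → E → E) (Δ : ℕ → E → E) (x : E) (t : ℕ → ℝ) : ℕ → E
  | 0 => Δ 0 x
  | k + 1 => Δ (k + 1) (γ (t k) (pdmpChain γ Δ x t k))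

open Filter
open scoped ENNReal

namespace PDMP

theorem ofReal_integral_le_lintegral_ofReal {α : Type*} [MeasurableSpace α] {μ : Measure α}
    {F : α → ℝ} (hF : ∀ a, 0 ≤ F a) :
    ENNReal.ofReal (∫ a, F a ∂μ) ≤ ∫⁻ a, ENNReal.ofReal (F a) ∂μ := by
  rw [← Real.enorm_of_nonneg (integral_nonneg hF)]
  exact (enorm_integral_le_lintegral_enorm F).trans_eq
    (lintegral_congr fun a => Real.enorm_of_nonneg (hF a))

def survival (g : ℝ → ℝ) (t : ℝ) : ℝ := Real.exp (-∫ s in (0:ℝ)..t, g s)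

def survivalDensity (g : ℝ → ℝ) (t : ℝ) : ℝ := g t * survival g t

theorem continuous_comp_max_zero {X : Type*} [TopologicalSpace X] {u : ℝ → X}
    (hu : ContinuousOn u (Ici 0)) : Continuous fun t => u (max t 0) :=
  hu.comp_continuous (continuous_id.max continuous_const) fun t => le_max_right t 0

section Survival

variable {g : ℝ → ℝ}

theorem survival_pos (t : ℝ) : 0 < survival g t := Real.exp_pos _

theorem survival_zero : survival g 0 = 1 := by simp [survival]

theorem survivalDensity_nonneg (hg : ∀ s, 0 ≤ g s) (t : ℝ) : 0 ≤ survivalDensity g t :=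
  mul_nonneg (hg t) (Real.exp_pos _).le

theorem survivalDensity_comp_max (g : ℝ → ℝ) {t : ℝ} (ht : 0 ≤ t) :
    survivalDensity (fun s => g (max s 0)) t = survivalDensity g t := by
  have hint : ∫ s in (0:ℝ)..t, g (max s 0) = ∫ s in (0:ℝ)..t, g s :=
    intervalIntegral.integral_congr fun s hs => by
      rw [uIcc_of_le ht] at hs
      rw [max_eq_left hs.1]
  simp only [survivalDensity, survival, hint, max_eq_left ht]

variable (hg : Continuous g)
include hg

theorem continuous_survivalDensity : Continuous (survivalDensity g) :=
  hg.mul (intervalIntegral.continuous_primitive (fun _ _ => hg.intervalIntegrable _ _) 0).neg.rexp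

theorem hasDerivAt_neg_survival (t : ℝ) :
    HasDerivAt (fun u => -survival g u) (survivalDensity g t) t := by
  have h := ((hg.integral_hasStrictDerivAt 0 t).hasDerivAt.fun_neg.exp).fun_neg
  refine h.congr_deriv ?_
  rw [survivalDensity, survival]
  ring

theorem integral_survivalDensity (T : ℝ) :
    ∫ t in (0:ℝ)..T, survivalDensity g t = 1 - survival g T := by
  rw [intervalIntegral.integral_eq_sub_of_hasDerivAt (fun t _ => hasDerivAt_neg_survival hg t)
    ((continuous_survivalDensity hg).intervalIntegrable _ _), survival_zero]
  ring

theorem integrableOn_survivalDensity (hg0 : ∀ s, 0 ≤ g s) :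
    IntegrableOn (survivalDensity g) (Ioi 0) := by
  refine integrableOn_Ioi_of_intervalIntegral_norm_bounded 1 0
    (fun T => (continuous_survivalDensity hg).integrableOn_Ioc) tendsto_id
    (Eventually.of_forall fun T => ?_)
  have hnorm : (fun t => ‖survivalDensity g t‖) = survivalDensity g :=
    funext fun t => Real.norm_of_nonneg (survivalDensity_nonneg hg0 t)
  rw [hnorm, integral_survivalDensity hg]
  exact sub_le_self 1 (survival_pos _).le

end Survival

section JumpLaw

variable {E : Type*} [MeasurableSpace E] {g : ℝ → ℝ} {φ : ℝ → E}

/-- The law of `φ τ` for a random time `τ > 0` with hazard rate `g`. -/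
def jumpLaw (g : ℝ → ℝ) (φ : ℝ → E) : Measure E :=
  ((volume.restrict (Ioi 0)).withDensity fun t => ENNReal.ofReal (survivalDensity g t)).map φ

theorem lintegral_jumpLaw (hg : Continuous g) (hφ : Measurable φ) {h : E → ℝ≥0∞}
    (hh : Measurable h) :
    ∫⁻ y, h y ∂jumpLaw g φ = ∫⁻ t in Ioi 0, ENNReal.ofReal (survivalDensity g t) * h (φ t) := by
  rw [jumpLaw, lintegral_map hh hφ, lintegral_withDensity_eq_lintegral_mul _
    (continuous_survivalDensity hg).measurable.ennreal_ofReal (g := fun t => h (φ t))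
    (hh.comp hφ)]
  rfl

theorem jumpLaw_apply (hg : Continuous g) (hg0 : ∀ s, 0 ≤ g s) (hφ : Measurable φ)
    {B : Set E} (hB : MeasurableSet B) :
    jumpLaw g φ B =
      ENNReal.ofReal (∫ t in Ioi 0, survivalDensity g t * B.indicator (fun _ => 1) (φ t)) := by
  have hnonneg : ∀ t, 0 ≤ survivalDensity g t * B.indicator (fun _ => (1:ℝ)) (φ t) := fun t =>
    mul_nonneg (survivalDensity_nonneg hg0 t) (indicator_nonneg (fun _ _ => zero_le_one) _)
  have hint : IntegrableOn (fun t => survivalDensity g t * B.indicator (fun _ => (1:ℝ)) (φ t))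
      (Ioi 0) := by
    refine (integrableOn_survivalDensity hg hg0).mul_bdd (c := 1)
      ((measurable_const.indicator hB).comp hφ).aestronglyMeasurable (Eventually.of_forall ?_)
    intro t
    by_cases ht : φ t ∈ B <;> simp [ht]
  rw [← lintegral_indicator_one hB, lintegral_jumpLaw hg hφ (measurable_one.indicator hB),
    ofReal_integral_eq_lintegral_ofReal hint (Eventually.of_forall hnonneg)]
  refine lintegral_congr fun t => ?_
  by_cases ht : φ t ∈ B <;> simp [ht]

end JumpLaw

section Kernel

variable {ι E : Type*} [Fintype ι] {γ : ℝ → E → E} {f : ι → E → ℝ}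

/-- `survival (flowRate γ f z)` is the paper's `e(z, ·)`. -/
def flowRate (γ : ℝ → E → E) (f : ι → E → ℝ) (z : E) (s : ℝ) : ℝ := ∑ j, f j (γ s z)

theorem flowRate_nonneg (hf : ∀ i y, 0 ≤ f i y) (z : E) (s : ℝ) : 0 ≤ flowRate γ f z s :=
  Finset.sum_nonneg fun j _ => hf j _

variable [TopologicalSpace E]

theorem continuous_flowRate_max (hfc : ∀ i, Continuous (f i))
    (hγc : ∀ z, ContinuousOn (fun t => γ t z) (Ici 0)) (z : E) :
    Continuous fun s => flowRate γ f z (max s 0) :=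
  continuous_finsetSum _ fun j _ => (hfc j).comp (continuous_comp_max_zero (hγc z))

variable [MeasurableSpace E] [BorelSpace E] {Δ : ι → E → E} {K : Kernel E E} {x : E}
  (hf : ∀ i y, 0 ≤ f i y) (hfc : ∀ i, Continuous (f i))
  (hγc : ∀ z, ContinuousOn (fun t => γ t z) (Ici 0))
  (hKx : ∀ B, MeasurableSet B → K x B = ENNReal.ofReal (∑ i, (f i x / ∑ j, f j x) *
      ∫ t in Ioi 0, survivalDensity (flowRate γ f (Δ i x)) t *
        B.indicator (fun _ => 1) (γ t (Δ i x))))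
include hf hfc hγc hKx

/-- The orbits are frozen at negative times, so that rates and positions become continuous on `ℝ`;
only `t > 0` matters. -/
theorem kernel_eq_sum_jumpLaw :
    K x = ∑ i, ENNReal.ofReal (f i x / ∑ j, f j x) •
      jumpLaw (fun s => flowRate γ f (Δ i x) (max s 0)) (fun t => γ (max t 0) (Δ i x)) := by
  ext B hB
  have hweight : ∀ i, 0 ≤ f i x / ∑ j, f j x := fun i =>
    div_nonneg (hf i x) (Finset.sum_nonneg fun j _ => hf j x)
  rw [hKx B hB, ENNReal.ofReal_sum_of_nonneg fun i _ => mul_nonneg (hweight i)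
      (integral_nonneg fun t => mul_nonneg (survivalDensity_nonneg (flowRate_nonneg hf _) t)
        (indicator_nonneg (fun _ _ => zero_le_one) _)),
    Measure.coe_finsetSum, Finset.sum_apply]
  refine Finset.sum_congr rfl fun i _ => ?_
  rw [Measure.smul_apply, smul_eq_mul, ENNReal.ofReal_mul (hweight i),
    jumpLaw_apply (continuous_flowRate_max hfc hγc _) (fun s => flowRate_nonneg hf _ _)
      (continuous_comp_max_zero (hγc _)).measurable hB]
  congr 2
  refine setIntegral_congr_fun measurableSet_Ioi fun t (ht : 0 < t) => ?_
  simp only [survivalDensity_comp_max _ ht.le, max_eq_left ht.le]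

theorem setLIntegral_survivalDensity_le {s : Set ℝ} (hs : s ⊆ Ioi 0) (i : ι) {h : E → ℝ≥0∞}
    (hh : Measurable h) :
    ENNReal.ofReal (f i x / ∑ j, f j x) *
        ∫⁻ t in s, ENNReal.ofReal (survivalDensity (flowRate γ f (Δ i x)) t) * h (γ t (Δ i x))
      ≤ ∫⁻ y, h y ∂K x := by
  set ν := fun i => ENNReal.ofReal (f i x / ∑ j, f j x) •
      jumpLaw (fun s => flowRate γ f (Δ i x) (max s 0)) (fun t => γ (max t 0) (Δ i x))
  calc _ ≤ ENNReal.ofReal (f i x / ∑ j, f j x) *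
        ∫⁻ t in Ioi 0, ENNReal.ofReal (survivalDensity (flowRate γ f (Δ i x)) t) *
          h (γ t (Δ i x)) := by gcongr
    _ = ∫⁻ y, h y ∂ν i := by
      rw [lintegral_smul_measure, lintegral_jumpLaw (continuous_flowRate_max hfc hγc _)
        (continuous_comp_max_zero (hγc _)).measurable hh, smul_eq_mul]
      congr 1
      refine setLIntegral_congr_fun measurableSet_Ioi fun t (ht : 0 < t) => ?_
      simp only [survivalDensity_comp_max _ ht.le, max_eq_left ht.le]
    _ ≤ ∑ j, ∫⁻ y, h y ∂ν j :=
      Finset.single_le_sum (f := fun j => ∫⁻ y, h y ∂ν j) (fun j _ => zero_le) (Finset.mem_univ i)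
    _ = ∫⁻ y, h y ∂K x := by
      rw [kernel_eq_sum_jumpLaw hf hfc hγc hKx, lintegral_finsetSum_measure]

end Kernel

section Chain

theorem survival_mul_eq_survivalDensity_mul_div {g : ℝ → ℝ} {t : ℝ} (ht : g t ≠ 0) (a : ℝ) :
    survival g t * a = survivalDensity g t * (a / g t) := by
  rw [survivalDensity]
  field_simp

theorem pdmpChain_shift {α : Type*} (γ : ℝ → α → α) (Δ : ℕ → α → α) (x : α) (T : ℕ → ℝ) :
    ∀ k, pdmpChain γ (fun l => Δ (l + 1)) (γ (T 0) (Δ 0 x)) (fun l => T (l + 1)) k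
      = pdmpChain γ Δ x T (k + 1)
  | 0 => rfl
  | k + 1 => by rw [pdmpChain, pdmpChain, pdmpChain_shift γ Δ x T k]

def extendByZero {n : ℕ} (t : Fin n → ℝ) (l : ℕ) : ℝ := if h : l < n then t ⟨l, h⟩ else 0

theorem extendByZero_cons_zero {n : ℕ} (y : ℝ) (t : Fin n → ℝ) :
    extendByZero (Fin.cons y t : Fin (n + 1) → ℝ) 0 = y := by
  simp [extendByZero]

theorem extendByZero_cons_succ {n : ℕ} (y : ℝ) (t : Fin n → ℝ) :
    (fun l => extendByZero (Fin.cons y t : Fin (n + 1) → ℝ) (l + 1)) = extendByZero t := by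
  funext l
  by_cases h : l < n
  · simp only [extendByZero, h, dif_pos, Nat.succ_lt_succ h]
    exact Fin.cons_succ (α := fun _ => ℝ) y t ⟨l, h⟩
  · simp [extendByZero, h]

theorem setLIntegral_pi_fin_succ_le {α : Type*} [MeasureSpace α] [SigmaFinite (volume : Measure α)]
    {n : ℕ} (s : Set α) (F : (Fin (n + 1) → α) → ℝ≥0∞) :
    ∫⁻ t in univ.pi fun _ => s, F t ≤
      ∫⁻ y in s, ∫⁻ t in univ.pi fun _ : Fin n => s, F (Fin.cons y t) := by
  have he := (volume_preserving_piFinSuccAbove (fun _ : Fin (n + 1) => α) 0).symm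
  have hpre : (MeasurableEquiv.piFinSuccAbove (fun _ : Fin (n + 1) => α) 0).symm ⁻¹'
      (univ.pi fun _ => s) = s ×ˢ univ.pi fun _ : Fin n => s := by
    ext p
    simp [Fin.forall_fin_succ]
  rw [← he.setLIntegral_comp_preimage_emb (MeasurableEquiv.measurableEmbedding _), hpre,
    Measure.volume_eq_prod, ← Measure.prod_restrict]
  simp_rw [MeasurableEquiv.piFinSuccAbove_symm_apply, Fin.insertNthEquiv, Fin.insertNth_zero']
  exact lintegral_prod_le _

variable {ι E : Type*} [Fintype ι] (γ : ℝ → E → E) (f : ι → E → ℝ) (Δ : ι → E → E)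

def chainDensity (idx : ℕ → ι) (x : E) (B : Set E) (n : ℕ) (T : ℕ → ℝ) : ℝ :=
  (∏ k ∈ Finset.range n, survival (flowRate γ f (pdmpChain γ (fun l => Δ (idx l)) x T k)) (T k) *
      f (idx (k + 1)) (γ (T k) (pdmpChain γ (fun l => Δ (idx l)) x T k))) *
    (survivalDensity (flowRate γ f (pdmpChain γ (fun l => Δ (idx l)) x T n)) (T n) *
      B.indicator (fun _ => 1) (γ (T n) (pdmpChain γ (fun l => Δ (idx l)) x T n)))

theorem chainDensity_zero (idx : ℕ → ι) (x : E) (B : Set E) (T : ℕ → ℝ) :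
    chainDensity γ f Δ idx x B 0 T = survivalDensity (flowRate γ f (Δ (idx 0) x)) (T 0) *
      B.indicator (fun _ => 1) (γ (T 0) (Δ (idx 0) x)) := by
  simp [chainDensity, pdmpChain]

theorem chainDensity_succ (idx : ℕ → ι) (x : E) (B : Set E) (n : ℕ) (T : ℕ → ℝ) :
    chainDensity γ f Δ idx x B (n + 1) T =
      survival (flowRate γ f (Δ (idx 0) x)) (T 0) * f (idx 1) (γ (T 0) (Δ (idx 0) x)) *
        chainDensity γ f Δ (fun l => idx (l + 1)) (γ (T 0) (Δ (idx 0) x)) B n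
          (fun l => T (l + 1)) := by
  simp only [chainDensity, Finset.prod_range_succ', ← pdmpChain_shift γ (fun l => Δ (idx l)) x T]
  rw [pdmpChain]
  ring

theorem chainDensity_nonneg (hf : ∀ i y, 0 ≤ f i y) (idx : ℕ → ι) (x : E) (B : Set E) (n : ℕ)
    (T : ℕ → ℝ) : 0 ≤ chainDensity γ f Δ idx x B n T :=
  mul_nonneg (Finset.prod_nonneg fun _ _ => mul_nonneg (survival_pos _).le (hf _ _))
    (mul_nonneg (survivalDensity_nonneg (flowRate_nonneg hf _) _)
      (indicator_nonneg (fun _ _ => zero_le_one) _))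

theorem ofReal_chainDensity_cons (hf : ∀ i y, 0 < f i y) (idx : ℕ → ι) (x : E) (B : Set E)
    (n : ℕ) (y : ℝ) {m : ℕ} (t : Fin m → ℝ) :
    ENNReal.ofReal (chainDensity γ f Δ idx x B (n + 1) (extendByZero (Fin.cons y t))) =
      ENNReal.ofReal (survivalDensity (flowRate γ f (Δ (idx 0) x)) y) *
        (ENNReal.ofReal (f (idx 1) (γ y (Δ (idx 0) x)) / ∑ j, f j (γ y (Δ (idx 0) x))) *
          ENNReal.ofReal (chainDensity γ f Δ (fun l => idx (l + 1)) (γ y (Δ (idx 0) x)) B n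
            (extendByZero t))) := by
  have hf0 : ∀ i y, 0 ≤ f i y := fun i y => (hf i y).le
  have hrate : flowRate γ f (Δ (idx 0) x) y ≠ 0 :=
    (Finset.sum_pos (fun j _ => hf j _) ⟨idx 0, Finset.mem_univ _⟩).ne'
  rw [chainDensity_succ, extendByZero_cons_zero, extendByZero_cons_succ,
    survival_mul_eq_survivalDensity_mul_div hrate, ← ENNReal.ofReal_mul, ← ENNReal.ofReal_mul,
    mul_assoc]
  · rfl
  · exact survivalDensity_nonneg (flowRate_nonneg hf0 _) _
  · exact div_nonneg (hf0 _ _) (flowRate_nonneg hf0 _ _)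

end Chain

theorem succ_eq_comp_right_of_succ_eq_comp_left {α : Type*} [MeasurableSpace α] {K : Kernel α α}
    {P : ℕ → Kernel α α} (h0 : P 0 = K) (hS : ∀ m, P (m + 1) = K ∘ₖ P m) (m : ℕ) :
    P (m + 1) = P m ∘ₖ K := by
  induction m with
  | zero => rw [hS, h0]
  | succ m ih => rw [hS, ih, ← Kernel.comp_assoc, ← hS, ih]

section Induction

variable {ι E : Type*} [Fintype ι] [TopologicalSpace E] [MeasurableSpace E] [BorelSpace E]
  {γ : ℝ → E → E} {f : ι → E → ℝ} {Δ : ι → E → E} {K : Kernel E E} {P : ℕ → Kernel E E}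
  {s : Set ℝ} {B : Set E}

theorem lintegral_chainDensity_le (hf : ∀ i y, 0 < f i y) (hfc : ∀ i, Continuous (f i))
    (hγc : ∀ z, ContinuousOn (fun t => γ t z) (Ici 0))
    (hK : ∀ x B, MeasurableSet B → K x B = ENNReal.ofReal (∑ i, (f i x / ∑ j, f j x) *
      ∫ t in Ioi 0, survivalDensity (flowRate γ f (Δ i x)) t *
        B.indicator (fun _ => 1) (γ t (Δ i x))))
    (hP0 : P 0 = K) (hPS : ∀ m, P (m + 1) = P m ∘ₖ K) (hs : s ⊆ Ioi 0) (hB : MeasurableSet B)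
    (n : ℕ) (idx : ℕ → ι) (x : E) :
    ENNReal.ofReal (f (idx 0) x / ∑ j, f j x) *
        ∫⁻ t in univ.pi fun _ : Fin (n + 1) => s,
          ENNReal.ofReal (chainDensity γ f Δ idx x B n (extendByZero t))
      ≤ P n x B := by
  have hf0 : ∀ i y, 0 ≤ f i y := fun i y => (hf i y).le
  have hjump := fun x => setLIntegral_survivalDensity_le (x := x) hf0 hfc hγc (hK x) hs
  induction n generalizing idx x with
  | zero =>
    rw [hP0, ← lintegral_indicator_one hB]
    refine le_trans ?_ (hjump x (idx 0) (measurable_one.indicator hB))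
    gcongr
    refine (setLIntegral_pi_fin_succ_le s _).trans_eq (lintegral_congr fun y => ?_)
    simp only [chainDensity_zero, extendByZero_cons_zero]
    rw [setLIntegral_const, volume_pi_pi, Finset.univ_eq_empty, Finset.prod_empty, mul_one]
    by_cases hy : γ y (Δ (idx 0) x) ∈ B <;> simp [hy]
  | succ n ih =>
    rw [hPS, Kernel.comp_apply' _ _ _ hB]
    refine le_trans ?_ (hjump x (idx 0) (Kernel.measurable_coe _ hB))
    gcongr
    refine (setLIntegral_pi_fin_succ_le s _).trans (lintegral_mono fun y => ?_)
    simp only [ofReal_chainDensity_cons _ _ _ hf, lintegral_const_mul' _ _ ENNReal.ofReal_ne_top]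
    gcongr
    exact ih (fun l => idx (l + 1)) _

end Induction

end PDMP

open PDMP

theorem jump_chain_kernel_lower_bound_general
    (N : ℕ)
    (b : (Fin N → ℝ) → (Fin N → ℝ))
    (γ : ℝ → (Fin N → ℝ) → (Fin N → ℝ))
    (hγ : ∀ x t, 0 ≤ t → HasDerivAt (fun s => γ s x) (b (γ t x)) t)
    (f : Fin N → (Fin N → ℝ) → ℝ)
    (hfpos : ∀ i x, 0 < f i x)
    (hfLip : ∀ i, ∃ L : NNReal, LipschitzWith L (f i))
    (a : Fin N → (Fin N → ℝ) → (Fin N → ℝ))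
    (K : Kernel (Fin N → ℝ) (Fin N → ℝ))
    (hK : ∀ x (B : Set (Fin N → ℝ)), MeasurableSet B →
      K x B = ENNReal.ofReal (∑ i,
        (f i x / ∑ j, f j x) *
          ∫ t in Ioi (0:ℝ),
            (∑ j, f j (γ t (x + a i x))) *
              Real.exp (-∫ s in (0:ℝ)..t, ∑ j, f j (γ s (x + a i x))) *
              B.indicator (fun _ => (1:ℝ)) (γ t (x + a i x))))
    (Kpow : ℕ → Kernel (Fin N → ℝ) (Fin N → ℝ))
    (hKpow0 : Kpow 0 = K)
    (hKpowS : ∀ m, Kpow (m + 1) = K.comp (Kpow m)) :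
    ∀ (n : ℕ) (idx : ℕ → Fin N) (ε : ℝ), 0 < ε →
      ∀ (x : Fin N → ℝ) (B : Set (Fin N → ℝ)), MeasurableSet B →
        ENNReal.ofReal
          ((f (idx 0) x / ∑ j, f j x) *
            ∫ t : Fin (n + 1) → ℝ in Set.univ.pi (fun _ => Set.Ioc (0:ℝ) ε),
              (∏ k ∈ Finset.range n,
                (Real.exp (-∫ s in (0:ℝ)..(if h : k < n + 1 then t ⟨k, h⟩ else 0),
                    ∑ j, f j (γ s (pdmpChain γ (fun l z => z + a (idx l) z) x
                      (fun l => if h : l < n + 1 then t ⟨l, h⟩ else 0) k))) *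
                  f (idx (k + 1))
                    (γ (if h : k < n + 1 then t ⟨k, h⟩ else 0)
                      (pdmpChain γ (fun l z => z + a (idx l) z) x
                        (fun l => if h : l < n + 1 then t ⟨l, h⟩ else 0) k)))) *
              ((∑ j, f j (γ (if h : n < n + 1 then t ⟨n, h⟩ else 0)
                  (pdmpChain γ (fun l z => z + a (idx l) z) x
                    (fun l => if h : l < n + 1 then t ⟨l, h⟩ else 0) n))) *
                Real.exp (-∫ s in (0:ℝ)..(if h : n < n + 1 then t ⟨n, h⟩ else 0),
                  ∑ j, f j (γ s (pdmpChain γ (fun l z => z + a (idx l) z) x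
                    (fun l => if h : l < n + 1 then t ⟨l, h⟩ else 0) n))) *
                B.indicator (fun _ => (1:ℝ))
                  (γ (if h : n < n + 1 then t ⟨n, h⟩ else 0)
                    (pdmpChain γ (fun l z => z + a (idx l) z) x
                      (fun l => if h : l < n + 1 then t ⟨l, h⟩ else 0) n))))
          ≤ Kpow n x B := by
  intro n idx ε _ x B hB
  have hfc : ∀ i, Continuous (f i) := fun i => (hfLip i).choose_spec.continuous
  have hγc : ∀ z, ContinuousOn (fun t => γ t z) (Ici 0) := fun z t ht =>
    (hγ z t ht).continuousAt.continuousWithinAt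
  have hweight : 0 ≤ f (idx 0) x / ∑ j, f j x :=
    div_nonneg (hfpos _ _).le (Finset.sum_nonneg fun j _ => (hfpos j x).le)
  have hchain := lintegral_chainDensity_le (Δ := fun i z => z + a i z) (s := Ioc 0 ε) hfpos hfc
    hγc hK hKpow0 (succ_eq_comp_right_of_succ_eq_comp_left hKpow0 hKpowS) Ioc_subset_Ioi_self hB
    n idx x
  rw [ENNReal.ofReal_mul hweight]
  refine le_trans (mul_le_mul_right ?_ _) hchain
  -- the integrand of the statement unfolds to `chainDensity` at the zero-extended times
  exact ofReal_integral_le_lintegral_ofReal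
    (F := fun t => chainDensity γ f (fun i z => z + a i z) idx x B n (extendByZero t))
    fun t => chainDensity_nonneg _ _ _ (fun i y => (hfpos i y).le) _ _ _ _ _

/-- the `(n+1)`-fold iterate of the jump-chain kernel `K` is bounded below by
the sub-probability corresponding to jumps of particles `i_0, …, i_n` with inter-jump times
in `(0, ε]`. -/
theorem jump_chain_kernel_lower_bound
    (N : ℕ) (hN : 1 ≤ N)
    (b : (Fin N → ℝ) → (Fin N → ℝ)) (hbC : ContDiff ℝ 1 b)
    (hbLip : ∃ L : NNReal, LipschitzWith L b)
    (hbGrowth : ∃ c : ℝ, ∀ x, ‖b x‖ ≤ c * (1 + ‖x‖))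
    (γ : ℝ → (Fin N → ℝ) → (Fin N → ℝ))
    (hγ0 : ∀ x, γ 0 x = x)
    (hγ : ∀ x t, 0 ≤ t → HasDerivAt (fun s => γ s x) (b (γ t x)) t)
    (f : Fin N → (Fin N → ℝ) → ℝ)
    (hfpos : ∀ i x, 0 < f i x)
    (hfLip : ∀ i, ∃ L : NNReal, LipschitzWith L (f i))
    (hfbdd : ∀ i, ∃ c : ℝ, ∀ x, f i x ≤ c)
    (hfdiv : ∀ x, (∫⁻ s in Ioi (0:ℝ), ENNReal.ofReal (∑ i, f i (γ s x))) = ⊤)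
    (a : Fin N → (Fin N → ℝ) → (Fin N → ℝ)) (haC : ∀ i, ContDiff ℝ 1 (a i))
    (K : Kernel (Fin N → ℝ) (Fin N → ℝ)) [IsMarkovKernel K]
    (hK : ∀ x (B : Set (Fin N → ℝ)), MeasurableSet B →
      K x B = ENNReal.ofReal (∑ i,
        (f i x / ∑ j, f j x) *
          ∫ t in Ioi (0:ℝ),
            (∑ j, f j (γ t (x + a i x))) *
              Real.exp (-∫ s in (0:ℝ)..t, ∑ j, f j (γ s (x + a i x))) *
              B.indicator (fun _ => (1:ℝ)) (γ t (x + a i x))))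
    (Kpow : ℕ → Kernel (Fin N → ℝ) (Fin N → ℝ))
    (hKpow0 : Kpow 0 = K)
    (hKpowS : ∀ m, Kpow (m + 1) = K.comp (Kpow m)) :
    ∀ (n : ℕ) (idx : ℕ → Fin N) (ε : ℝ), 0 < ε →
      ∀ (x : Fin N → ℝ) (B : Set (Fin N → ℝ)), MeasurableSet B →
        ENNReal.ofReal
          ((f (idx 0) x / ∑ j, f j x) *
            ∫ t : Fin (n + 1) → ℝ in Set.univ.pi (fun _ => Set.Ioc (0:ℝ) ε),
              (∏ k ∈ Finset.range n,
                (Real.exp (-∫ s in (0:ℝ)..(if h : k < n + 1 then t ⟨k, h⟩ else 0),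
                    ∑ j, f j (γ s (pdmpChain γ (fun l z => z + a (idx l) z) x
                      (fun l => if h : l < n + 1 then t ⟨l, h⟩ else 0) k))) *
                  f (idx (k + 1))
                    (γ (if h : k < n + 1 then t ⟨k, h⟩ else 0)
                      (pdmpChain γ (fun l z => z + a (idx l) z) x
                        (fun l => if h : l < n + 1 then t ⟨l, h⟩ else 0) k)))) *
              ((∑ j, f j (γ (if h : n < n + 1 then t ⟨n, h⟩ else 0)
                  (pdmpChain γ (fun l z => z + a (idx l) z) x
                    (fun l => if h : l < n + 1 then t ⟨l, h⟩ else 0) n))) *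
                Real.exp (-∫ s in (0:ℝ)..(if h : n < n + 1 then t ⟨n, h⟩ else 0),
                  ∑ j, f j (γ s (pdmpChain γ (fun l z => z + a (idx l) z) x
                    (fun l => if h : l < n + 1 then t ⟨l, h⟩ else 0) n))) *
                B.indicator (fun _ => (1:ℝ))
                  (γ (if h : n < n + 1 then t ⟨n, h⟩ else 0)
                    (pdmpChain γ (fun l z => z + a (idx l) z) x
                      (fun l => if h : l < n + 1 then t ⟨l, h⟩ else 0) n))))
          ≤ Kpow n x B :=
  jump_chain_kernel_lower_bound_general N b γ hγ f hfpos hfLip a K hK Kpow hKpow0 hKpowS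
end
end

section
/- Let G : ℝ^{N+1} → ℝ^N be continuously differentiable such that its differential DG(z) : ℝ^{N+1} → ℝ^N is surjective at every point z (equivalently, the N-dimensional Jacobian J_G(z) = √(det(DG(z) DG(z)^T)) is strictly positive everywhere). Then for every σ-finite measure μ on ℝ^{N+1} that is absolutely continuous with respect to Lebesgue measure, the pushforward measure G_*μ is absolutely continuous with respect to Lebesgue measure on ℝ^N. -/
/-!
Near a point `a`, complete `G` by a continuous linear projection `P` onto `ker DG(a)`. The map
`z ↦ (G z, P z)` has invertible derivative at `a`, hence near `a`, and there `G⁻¹' t` is its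
preimage of `t ×ˢ ker DG(a)`, a null set when `t` is. Maps with invertible derivative pull back
null sets: locally they are injective, and by the change of variables formula an injective map
with nonvanishing Jacobian cannot send a set of positive measure onto a null set. Hence
`volume.map G ≪ volume`, and `μ ≪ volume` is transported along the pushforward.
-/

open MeasureTheory Measure Set Filter Topology

section LinearAlgebra

variable {𝕜 E F : Type*} [NontriviallyNormedField 𝕜] [CompleteSpace 𝕜]
  [NormedAddCommGroup E] [NormedSpace 𝕜 E] [CompleteSpace E]
  [NormedAddCommGroup F] [NormedSpace 𝕜 F] [FiniteDimensional 𝕜 F]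

theorem ContinuousLinearMap.exists_isInvertible_prod_of_range_eq_top (D : E →L[𝕜] F)
    (hD : D.range = ⊤) : ∃ P : E →L[𝕜] D.ker, (D.prod P).IsInvertible := by
  have := FiniteDimensional.complete 𝕜 F
  obtain ⟨P, hP⟩ := D.ker_closedComplemented_of_finiteDimensional_range
  exact ⟨P, D.equivProdOfSurjectiveOfIsCompl P hD (LinearMap.range_eq_of_proj hP)
    (LinearMap.isCompl_of_proj hP), rfl⟩

end LinearAlgebra

variable {E F : Type*}
  [NormedAddCommGroup E] [NormedSpace ℝ E]
  [MeasurableSpace E] [BorelSpace E] {μ : Measure E} [μ.IsAddHaarMeasure]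
  [NormedAddCommGroup F] [NormedSpace ℝ F] [FiniteDimensional ℝ F]
  [MeasurableSpace F] [BorelSpace F] {ν : Measure F} [ν.IsAddHaarMeasure]

theorem ContinuousLinearEquiv.addHaar_preimage_eq_zero (e : E ≃L[ℝ] F) {t : Set F}
    (ht : ν t = 0) : μ (e ⁻¹' t) = 0 := by
  have hac : μ.map e ≪ ν := absolutelyContinuous_isAddHaarMeasure _ _
  exact (e.toHomeomorph.toMeasurableEquiv.map_apply (μ := μ) t).symm.trans (hac ht)

variable [FiniteDimensional ℝ E]

theorem addHaar_eq_zero_of_addHaar_image_eq_zero {f : E → E} {f' : E → E →L[ℝ] E}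
    {s : Set E} (hs : MeasurableSet s) (hf' : ∀ x ∈ s, HasFDerivWithinAt f (f' x) s x)
    (hf : InjOn f s) (hdet : ∀ x ∈ s, (f' x).det ≠ 0) (himage : μ (f '' s) = 0) : μ s = 0 := by
  have hzero : (fun x => ENNReal.ofReal |(f' x).det|) =ᵐ[μ.restrict s] 0 := by
    rw [← lintegral_eq_zero_iff' (aemeasurable_ofReal_abs_det_fderivWithin μ hs hf'),
      lintegral_abs_det_fderiv_eq_addHaar_image μ hs hf' hf, himage]
  rw [EventuallyEq, ae_restrict_iff' hs] at hzero
  refine measure_eq_zero_iff_ae_notMem.2 (hzero.mono fun x hx hxs => ?_)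
  simpa [hdet x hxs] using hx hxs

theorem ContDiff.addHaar_preimage_inter_isInvertible_fderiv_eq_zero {f : E → F}
    (hf : ContDiff ℝ 1 f) {t : Set F} (ht : ν t = 0) :
    μ (f ⁻¹' t ∩ {x | (fderiv ℝ f x).IsInvertible}) = 0 := by
  obtain ⟨t', htt', ht'm, ht'⟩ := exists_measurable_superset_of_null ht
  refine measure_mono_null (inter_subset_inter_left _ (preimage_mono htt')) ?_
  have hW : IsOpen {x | (fderiv ℝ f x).IsInvertible} :=
    ContinuousLinearEquiv.isOpen.preimage (hf.continuous_fderiv one_ne_zero)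
  refine measure_null_of_locally_null _ ?_
  rintro x ⟨-, e, he⟩
  have hstrict : HasStrictFDerivAt f (e : E →L[ℝ] F) x :=
    he ▸ hf.contDiffAt.hasStrictFDerivAt one_ne_zero
  set Φ := hstrict.toOpenPartialHomeomorph f
  set s := f ⁻¹' t' ∩ {x | (fderiv ℝ f x).IsInvertible} ∩ Φ.source
  refine ⟨s, inter_mem_nhdsWithin _
    (Φ.open_source.mem_nhds hstrict.mem_toOpenPartialHomeomorph_source), ?_⟩
  refine addHaar_eq_zero_of_addHaar_image_eq_zero (f := e.symm ∘ f)
    (f' := fun y => (e.symm : F →L[ℝ] E) ∘L fderiv ℝ f y)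
    (((ht'm.preimage hf.continuous.measurable).inter hW.measurableSet).inter
      Φ.open_source.measurableSet)
    (fun y _ => (e.symm.hasFDerivAt.comp y
      (hf.differentiable one_ne_zero y).hasFDerivAt).hasFDerivWithinAt)
    (e.symm.injective.comp_injOn (Φ.injOn.mono inter_subset_right)) ?_ ?_
  · rintro y ⟨⟨-, e', he'⟩, -⟩
    rw [← he', ContinuousLinearEquiv.comp_coe]
    exact (e'.trans e.symm).toLinearEquiv.isUnit_det'.ne_zero
  · refine measure_mono_null ?_ (e.addHaar_preimage_eq_zero (μ := μ) ht')
    rintro _ ⟨y, ⟨⟨hy, -⟩, -⟩, rfl⟩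
    simpa using hy

theorem ContDiff.map_absolutelyContinuous_of_surjective_fderiv {G : E → F} (hG : ContDiff ℝ 1 G)
    (hsurj : ∀ z, Function.Surjective (fderiv ℝ G z)) : μ.map G ≪ ν := by
  refine AbsolutelyContinuous.mk fun t ht hνt => ?_
  rw [map_apply hG.continuous.measurable ht]
  refine measure_null_of_locally_null _ fun a _ => ?_
  obtain ⟨P, hP⟩ := (fderiv ℝ G a).exists_isInvertible_prod_of_range_eq_top
    (LinearMap.range_eq_top.2 (hsurj a))
  let : MeasurableSpace (fderiv ℝ G a).ker := borel _
  have : BorelSpace (fderiv ℝ G a).ker := ⟨rfl⟩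
  have hφ : ContDiff ℝ 1 fun z => (G z, P z) := hG.prodMk P.contDiff
  have hfderiv : ∀ z, fderiv ℝ (fun z => (G z, P z)) z = (fderiv ℝ G z).prod P := fun z =>
    ((hG.differentiable one_ne_zero z).fderiv_prodMk P.differentiableAt).trans
      (by rw [P.fderiv])
  set U := {z | (fderiv ℝ (fun z => (G z, P z)) z).IsInvertible}
  have hU : IsOpen U := ContinuousLinearEquiv.isOpen.preimage (hφ.continuous_fderiv one_ne_zero)
  have haU : a ∈ U := by simpa [U, hfderiv] using hP
  refine ⟨G ⁻¹' t ∩ U, inter_mem_nhdsWithin _ (hU.mem_nhds haU), ?_⟩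
  have hnull : (ν.prod addHaar) (t ×ˢ (univ : Set (fderiv ℝ G a).ker)) = 0 := by
    simp [prod_prod, hνt]
  have hsub : G ⁻¹' t ∩ U ⊆ (fun z => (G z, P z)) ⁻¹' (t ×ˢ univ) ∩ U :=
    fun z hz => ⟨⟨hz.1, trivial⟩, hz.2⟩
  exact measure_mono_null hsub (hφ.addHaar_preimage_inter_isInvertible_fderiv_eq_zero hnull)

theorem pushforward_of_submersion_absolutelyContinuous_general
    (N : ℕ)
    (G : EuclideanSpace ℝ (Fin (N + 1)) → EuclideanSpace ℝ (Fin N))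
    (hG : ContDiff ℝ 1 G)
    (hsurj : ∀ z, Function.Surjective (fderiv ℝ G z))
    (μ : Measure (EuclideanSpace ℝ (Fin (N + 1))))
    (hμ : μ ≪ volume) :
    μ.map G ≪ (volume : Measure (EuclideanSpace ℝ (Fin N))) :=
  (hμ.map hG.continuous.measurable).trans
    (hG.map_absolutelyContinuous_of_surjective_fderiv hsurj)

/-- If `G : ℝ^{N+1} → ℝ^N` is `C¹` with everywhere surjective differential
(equivalently, everywhere strictly positive `N`-dimensional Jacobian), then the pushforward
under `G` of any σ-finite measure on `ℝ^{N+1}` that is absolutely continuous with respect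
to Lebesgue measure is absolutely continuous with respect to Lebesgue measure on `ℝ^N`. -/
theorem pushforward_of_submersion_absolutelyContinuous
    (N : ℕ) (hN : 1 ≤ N)
    (G : EuclideanSpace ℝ (Fin (N + 1)) → EuclideanSpace ℝ (Fin N))
    (hG : ContDiff ℝ 1 G)
    (hsurj : ∀ z, Function.Surjective (fderiv ℝ G z))
    (μ : Measure (EuclideanSpace ℝ (Fin (N + 1)))) [SigmaFinite μ]
    (hμ : μ ≪ volume) :
    μ.map G ≪ (volume : Measure (EuclideanSpace ℝ (Fin N))) :=
  pushforward_of_submersion_absolutelyContinuous_general N G hG hsurj μ hμ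
end

section
/- Assume in addition that for every 1 ≤ i ≤ N the map G_i : [0,∞) × ℝ^N → ℝ^N, G_i(t,x) = γ_t(Δ_i(x)), is continuously differentiable and its differential DG_i(t,x) : ℝ^{N+1} → ℝ^N is surjective at every point (t,x) (equivalently, the vector b(γ_t(Δ_i(x))) together with the columns of the matrix (∂γ_t/∂x)(Δ_i(x)) · A^i(x) span ℝ^N, where A^i is the Jacobian of Δ_i). Then for every probability density p on ℝ^N, the one-step law pK : B ↦ ∫_{ℝ^N} K(x, B) p(x) dx is absolutely continuous with respect to Lebesgue measure on ℝ^N. -/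
open MeasureTheory Set ProbabilityTheory

noncomputable section

open Measure Filter Topology

/-! Each `G_i(t, x) = γ_t(Δ_i x)` is a submersion on the open set `(0,∞) × ℝ^N`. Completing its
differential by a projection `P` onto the kernel turns `(G_i, P)` into a local diffeomorphism, and
`G_i⁻¹ B = (G_i, P)⁻¹ (B × ker)`; so preimages of Lebesgue-null sets are null. By Fubini, for
almost every `x` the set of jump times `t > 0` with `γ_t(Δ_i x) ∈ B` is null, hence `K(x, B) = 0`
for almost every `x`, and integrating against `p(x) dx` gives `pK(B) = 0`. -/

theorem ContinuousLinearEquiv.quasiMeasurePreserving_addHaar {E F : Type*}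
    [NormedAddCommGroup E] [NormedSpace ℝ E] [MeasurableSpace E] [BorelSpace E]
    [NormedAddCommGroup F] [NormedSpace ℝ F] [FiniteDimensional ℝ F] [MeasurableSpace F]
    [BorelSpace F] (e : E ≃L[ℝ] F) (μ : Measure E) [IsAddHaarMeasure μ] (ν : Measure F)
    [IsAddHaarMeasure ν] : QuasiMeasurePreserving e μ ν :=
  ⟨e.continuous.measurable, absolutelyContinuous_isAddHaarMeasure _ _⟩

section Submersion

variable {E F : Type*} [NormedAddCommGroup E] [NormedSpace ℝ E] [FiniteDimensional ℝ E]
  [MeasurableSpace E] [BorelSpace E] (μ : Measure E) [IsAddHaarMeasure μ]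
  [NormedAddCommGroup F] [NormedSpace ℝ F] [FiniteDimensional ℝ F]
  [MeasurableSpace F] [BorelSpace F] (ν : Measure F) [IsAddHaarMeasure ν]

theorem ContDiffAt.exists_mem_nhds_measure_inter_preimage_null {Φ : E → F} {q : E}
    {e : E ≃L[ℝ] F} (hΦ : ContDiffAt ℝ 1 Φ q) (hΦ' : HasFDerivAt Φ (e : E →L[ℝ] F) q) :
    ∃ V ∈ 𝓝 q, ∀ S, ν S = 0 → μ (V ∩ Φ ⁻¹' S) = 0 := by
  set g := hΦ.localInverse hΦ' one_ne_zero
  obtain ⟨u, hu, hgu⟩ :=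
    (hΦ.to_localInverse hΦ' one_ne_zero).contDiffOn le_rfl (by simp)
  have hleft : ∀ᶠ w in 𝓝 q, g (Φ w) = w :=
    (hΦ.hasStrictFDerivAt' hΦ' one_ne_zero).eventually_left_inverse
  refine ⟨{w | g (Φ w) = w} ∩ Φ ⁻¹' u,
    inter_mem hleft (hΦ.continuousAt.preimage_mem_nhds hu),
    fun S hS => measure_mono_null (t := (g ∘ e) '' (e ⁻¹' (u ∩ S))) ?_ ?_⟩
  · rintro w ⟨⟨hgw, hwu⟩, hwS⟩
    exact ⟨e.symm (Φ w), by simpa using And.intro hwu hwS, by simpa using hgw⟩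
  -- the Jacobian lemma is about self-maps of `E`, hence `g ∘ e` rather than `g`
  · refine addHaar_image_eq_zero_of_differentiableOn_of_addHaar_eq_zero μ ?_
      ((e.quasiMeasurePreserving_addHaar μ ν).preimage_null
        (measure_mono_null inter_subset_right hS))
    exact (hgu.differentiableOn one_ne_zero).comp e.differentiable.differentiableOn
      fun w hw => hw.1

theorem ContDiffAt.exists_mem_nhds_measure_inter_preimage_null_of_surjective {g : E → F}
    {q : E} (hg : ContDiffAt ℝ 1 g q) (hsurj : Function.Surjective (fderiv ℝ g q)) :
    ∃ V ∈ 𝓝 q, ∀ B, ν B = 0 → μ (V ∩ g ⁻¹' B) = 0 := by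
  set f' := fderiv ℝ g q
  obtain ⟨P, hP⟩ := Submodule.ClosedComplemented.of_finiteDimensional f'.ker
  have hker : (f'.prod P : E →ₗ[ℝ] F × f'.ker).ker = ⊥ := by
    refine LinearMap.ker_eq_bot'.2 fun w hw => ?_
    have hw' : w ∈ f'.ker := congrArg Prod.fst hw
    simpa [hP ⟨w, hw'⟩] using congrArg Prod.snd hw
  have hrange : (f'.prod P : E →ₗ[ℝ] F × f'.ker).range = ⊤ := by
    refine LinearMap.range_eq_top.2 fun ⟨y, k⟩ => ?_
    obtain ⟨w, rfl⟩ := hsurj y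
    exact ⟨w - P w + k, by simp [hP]⟩
  obtain ⟨V, hV, hnull⟩ := ContDiffAt.exists_mem_nhds_measure_inter_preimage_null μ
    (ν.prod addHaar) (e := .ofBijective _ hker hrange) (hg.prodMk P.contDiff.contDiffAt)
    ((hg.differentiableAt one_ne_zero).hasFDerivAt.prodMk P.hasFDerivAt)
  refine ⟨V, hV, fun B hB => ?_⟩
  have h := hnull (B ×ˢ univ) (by simp [prod_prod, hB])
  rwa [mk_preimage_prod, preimage_univ, inter_univ] at h

theorem ContDiffOn.measure_inter_preimage_null_of_surjective {g : E → F} {U : Set E}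
    (hU : IsOpen U) (hg : ContDiffOn ℝ 1 g U)
    (hsurj : ∀ q ∈ U, Function.Surjective (fderiv ℝ g q)) {B : Set F} (hB : ν B = 0) :
    μ (U ∩ g ⁻¹' B) = 0 := by
  refine measure_null_of_locally_null _ fun q hq => ?_
  obtain ⟨V, hV, hnull⟩ := (hg.contDiffAt (hU.mem_nhds hq.1))
    |>.exists_mem_nhds_measure_inter_preimage_null_of_surjective μ ν (hsurj q hq.1)
  exact ⟨(U ∩ g ⁻¹' B) ∩ V, inter_mem_nhdsWithin _ hV,
    measure_mono_null (fun w hw => mem_inter hw.2 hw.1.2) (hnull B hB)⟩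

theorem ContDiffOn.ae_ae_notMem_preimage_of_surjective {G : ℝ × E → F} {U : Set (ℝ × E)}
    (hU : IsOpen U) (hG : ContDiffOn ℝ 1 G U)
    (hsurj : ∀ q ∈ U, Function.Surjective (fderiv ℝ G q)) {B : Set F} (hB : ν B = 0) :
    ∀ᵐ x ∂μ, ∀ᵐ t, (t, x) ∈ U → G (t, x) ∉ B := by
  have hnull : (volume.prod μ) (U ∩ G ⁻¹' B) = 0 :=
    hG.measure_inter_preimage_null_of_surjective _ ν hU hsurj hB
  have hswap : (μ.prod volume) (Prod.swap ⁻¹' (U ∩ G ⁻¹' B)) = 0 :=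
    measurePreserving_swap.quasiMeasurePreserving.preimage_null hnull
  filter_upwards [measure_ae_null_of_prod_null hswap] with x hx
  filter_upwards [measure_eq_zero_iff_ae_notMem.1 hx] with t ht htU htB
  exact ht ⟨htU, htB⟩

end Submersion

theorem Measure.bind_absolutelyContinuous_of_forall_ae {α β : Type*} [MeasurableSpace α]
    [MeasurableSpace β] {μ : Measure α} {ν : Measure β} (κ : Kernel α β)
    (h : ∀ B, MeasurableSet B → ν B = 0 → ∀ᵐ x ∂μ, κ x B = 0) :
    μ.bind (fun x => κ x) ≪ ν := by
  refine AbsolutelyContinuous.mk fun B hBm hB => ?_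
  rw [bind_apply hBm κ.measurable.aemeasurable]
  exact (lintegral_congr_ae (h B hBm hB)).trans lintegral_zero

theorem one_step_law_absolutelyContinuous_general
    (N : ℕ)
    (γ : ℝ → (Fin N → ℝ) → (Fin N → ℝ))
    (f : Fin N → (Fin N → ℝ) → ℝ)
    (a : Fin N → (Fin N → ℝ) → (Fin N → ℝ))
    (K : Kernel (Fin N → ℝ) (Fin N → ℝ))
    (hK : ∀ x (B : Set (Fin N → ℝ)), MeasurableSet B →
      K x B = ENNReal.ofReal (∑ i,
        (f i x / ∑ j, f j x) *
          ∫ t in Ioi (0:ℝ),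
            (∑ j, f j (γ t (x + a i x))) *
              Real.exp (-∫ s in (0:ℝ)..t, ∑ j, f j (γ s (x + a i x))) *
              B.indicator (fun _ => (1:ℝ)) (γ t (x + a i x))))
    -- `G_i(t,x) = γ_t(Δ_i(x))` is `C¹` on `[0,∞) × ℝ^N` with surjective differential
    (hGC : ∀ i : Fin N,
      ContDiffOn ℝ 1 (fun q : ℝ × (Fin N → ℝ) => γ q.1 (q.2 + a i q.2))
        (Ici (0:ℝ) ×ˢ (univ : Set (Fin N → ℝ))))
    (hGsurj : ∀ i : Fin N, ∀ t : ℝ, 0 ≤ t → ∀ x : Fin N → ℝ,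
      Function.Surjective
        (fderivWithin ℝ (fun q : ℝ × (Fin N → ℝ) => γ q.1 (q.2 + a i q.2))
          (Ici (0:ℝ) ×ˢ (univ : Set (Fin N → ℝ))) (t, x)))
    -- a probability density `p` on `ℝ^N`
    (p : (Fin N → ℝ) → ℝ) :
    ((volume.withDensity fun x => ENNReal.ofReal (p x)).bind fun x => K x)
      ≪ (volume : Measure (Fin N → ℝ)) := by
  refine Measure.bind_absolutelyContinuous_of_forall_ae K fun B hBm hB => ?_
  refine (withDensity_absolutelyContinuous _ _).ae_le ?_
  have hslice : ∀ i, ∀ᵐ x, ∀ᵐ t, (t, x) ∈ Ioi (0:ℝ) ×ˢ (univ : Set (Fin N → ℝ)) →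
      γ t (x + a i x) ∉ B := fun i =>
    (hGC i).mono (prod_mono Ioi_subset_Ici_self subset_rfl)
    |>.ae_ae_notMem_preimage_of_surjective volume volume (isOpen_Ioi.prod isOpen_univ)
      (fun q hq => by
        rw [← fderivWithin_of_mem_nhds (prod_mem_nhds (Ici_mem_nhds hq.1) univ_mem)]
        exact hGsurj i q.1 hq.1.le q.2) hB
  filter_upwards [ae_all_iff.2 hslice] with x hx
  have hint : ∀ i, ∫ t in Ioi (0:ℝ),
      (∑ j, f j (γ t (x + a i x))) *
        Real.exp (-∫ s in (0:ℝ)..t, ∑ j, f j (γ s (x + a i x))) *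
        B.indicator (fun _ => (1:ℝ)) (γ t (x + a i x)) = 0 := fun i => by
    refine integral_eq_zero_of_ae ?_
    filter_upwards [(ae_restrict_iff' measurableSet_Ioi).2
      ((hx i).mono fun t ht ht0 => ht ⟨ht0, trivial⟩)] with t ht
    simp [indicator_of_notMem ht]
  simp [hK x B hBm, hint]

/-- if for every `i` the map `G_i(t,x) = γ_t(Δ_i(x))` on `[0,∞) × ℝ^N` is `C¹`
with everywhere surjective differential, then for every probability density `p` on `ℝ^N`
the one-step law `pK : B ↦ ∫ K(x,B) p(x) dx` of the jump chain is absolutely continuous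
with respect to Lebesgue measure. -/
theorem one_step_law_absolutelyContinuous
    (N : ℕ) (hN : 1 ≤ N)
    (b : (Fin N → ℝ) → (Fin N → ℝ)) (hbC : ContDiff ℝ 1 b)
    (hbLip : ∃ L : NNReal, LipschitzWith L b)
    (hbGrowth : ∃ c : ℝ, ∀ x, ‖b x‖ ≤ c * (1 + ‖x‖))
    (γ : ℝ → (Fin N → ℝ) → (Fin N → ℝ))
    (hγ0 : ∀ x, γ 0 x = x)
    (hγ : ∀ x t, 0 ≤ t → HasDerivAt (fun s => γ s x) (b (γ t x)) t)
    (f : Fin N → (Fin N → ℝ) → ℝ)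
    (hfpos : ∀ i x, 0 < f i x)
    (hfLip : ∀ i, ∃ L : NNReal, LipschitzWith L (f i))
    (hfbdd : ∀ i, ∃ c : ℝ, ∀ x, f i x ≤ c)
    (hfdiv : ∀ x, (∫⁻ s in Ioi (0:ℝ), ENNReal.ofReal (∑ i, f i (γ s x))) = ⊤)
    (a : Fin N → (Fin N → ℝ) → (Fin N → ℝ)) (haC : ∀ i, ContDiff ℝ 1 (a i))
    (K : Kernel (Fin N → ℝ) (Fin N → ℝ)) [IsMarkovKernel K]
    (hK : ∀ x (B : Set (Fin N → ℝ)), MeasurableSet B →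
      K x B = ENNReal.ofReal (∑ i,
        (f i x / ∑ j, f j x) *
          ∫ t in Ioi (0:ℝ),
            (∑ j, f j (γ t (x + a i x))) *
              Real.exp (-∫ s in (0:ℝ)..t, ∑ j, f j (γ s (x + a i x))) *
              B.indicator (fun _ => (1:ℝ)) (γ t (x + a i x))))
    -- `G_i(t,x) = γ_t(Δ_i(x))` is `C¹` on `[0,∞) × ℝ^N` with surjective differential
    (hGC : ∀ i : Fin N,
      ContDiffOn ℝ 1 (fun q : ℝ × (Fin N → ℝ) => γ q.1 (q.2 + a i q.2))
        (Ici (0:ℝ) ×ˢ (univ : Set (Fin N → ℝ))))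
    (hGsurj : ∀ i : Fin N, ∀ t : ℝ, 0 ≤ t → ∀ x : Fin N → ℝ,
      Function.Surjective
        (fderivWithin ℝ (fun q : ℝ × (Fin N → ℝ) => γ q.1 (q.2 + a i q.2))
          (Ici (0:ℝ) ×ˢ (univ : Set (Fin N → ℝ))) (t, x)))
    -- a probability density `p` on `ℝ^N`
    (p : (Fin N → ℝ) → ℝ) (hpm : Measurable p) (hp0 : ∀ x, 0 ≤ p x)
    (hp1 : (∫ x, p x) = 1) :
    ((volume.withDensity fun x => ENNReal.ofReal (p x)).bind fun x => K x)
      ≪ (volume : Measure (Fin N → ℝ)) :=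
  one_step_law_absolutelyContinuous_general N γ f a K hK hGC hGsurj p
end
end

section
/- Let π be the image of m under the coordinate projection x ↦ x^1. Then for every d > 0, the restriction of π to the open set {v ∈ ℝ : |b̃(v)| > d} is absolutely continuous with respect to Lebesgue measure, with a density bounded (Lebesgue-almost everywhere on this set) by N·F/d. -/
open MeasureTheory Set

noncomputable section

/-- The house-of-cards jump map `Δ_i`: coordinate `i` is reset to `0`, coordinate `j ≠ i`
is moved to `x^j + a_i^j(x^j)`. -/
def jmap (N : ℕ) (aij : Fin N → Fin N → ℝ → ℝ) (i : Fin N) (x : Fin N → ℝ) : Fin N → ℝ :=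
  fun j => if j = i then 0 else x j + aij i j (x j)

/-- The coordinatewise flow `γ_t(x) = (γ̃_t(x^1),…,γ̃_t(x^N))`. -/
def flowN (N : ℕ) (γt : ℝ → ℝ → ℝ) (t : ℝ) (x : Fin N → ℝ) : Fin N → ℝ :=
  fun j => γt t (x j)

/-- The survival factor `e(x,t) = exp(-∫_0^t f̄(γ_s(x)) ds)`. -/
def surv (N : ℕ) (γt : ℝ → ℝ → ℝ) (f : Fin N → ℝ → ℝ) (x : Fin N → ℝ) (t : ℝ) : ℝ :=
  Real.exp (-∫ s in (0:ℝ)..t, ∑ i, f i (γt s (x i)))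

open scoped ENNReal NNReal

/-! Test the representation identity against `g(x) = 1_A(x^1)` for a set `A` on which
`|b̃| > d`. Since `e ≤ 1` and `f_i ≤ F`, each of the `N` jump terms is at most `F` times the time
the one-dimensional trajectory `t ↦ γ̃_t(w)` spends in `A`. A trajectory of a Lipschitz field on
`ℝ` is injective until it reaches a zero of `b̃`, where it stays, so the change of variables
`v = γ̃_t(w)`, `|dv/dt| = |b̃(v)| > d`, bounds that time by `|A| / d`. Hence `π(A) ≤ (N F / d) |A|`,
and the Radon–Nikodym density of `π` on `{|b̃| > d}` is at most `N F / d`. -/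

section Trajectory

variable {K : ℝ≥0} {b φ : ℝ → ℝ}

theorem trajectory_eq_of_field_eq_zero (hb : LipschitzWith K b)
    (hφ : ∀ t, 0 ≤ t → HasDerivAt φ (b (φ t)) t) {t₀ t : ℝ} (ht₀ : 0 ≤ t₀)
    (hzero : b (φ t₀) = 0) (ht : t₀ ≤ t) : φ t = φ t₀ := by
  have hconst : ∀ u ∈ Ico t₀ t, HasDerivWithinAt (fun _ => φ t₀) (b (φ t₀)) (Ici u) u :=
    fun u _ => hzero ▸ hasDerivWithinAt_const u _ _
  refine ODE_solution_unique (v := fun _ => b) (fun _ => hb)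
    (fun u hu => (hφ u (ht₀.trans hu.1)).continuousAt.continuousWithinAt)
    (fun u hu => (hφ u (ht₀.trans hu.1)).hasDerivWithinAt) continuousOn_const hconst rfl
    ⟨ht, le_rfl⟩

/-- Rolle's theorem turns a repeated value into a zero of the field, where the trajectory
then stays forever. -/
theorem injOn_trajectory (hb : LipschitzWith K b) (hφ : ∀ t, 0 ≤ t → HasDerivAt φ (b (φ t)) t) :
    InjOn φ ({t | b (φ t) ≠ 0} ∩ Ioi 0) := by
  intro s hs t ht hst
  wlog hlt : s < t generalizing s t
  · rcases (not_lt.1 hlt).lt_or_eq with hts | rfl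
    · exact (this ht hs hst.symm hts).symm
    · rfl
  obtain ⟨c, hc, hc0⟩ := exists_hasDerivAt_eq_zero hlt
    (fun u hu => (hφ u (hs.2.le.trans hu.1)).continuousAt.continuousWithinAt) hst
    (fun u hu => hφ u (hs.2.le.trans hu.1.le))
  have hstays := trajectory_eq_of_field_eq_zero hb hφ (hs.2.le.trans hc.1.le) hc0 hc.2.le
  exact absurd (hstays ▸ hc0) ht.1

theorem setLIntegral_indicator_comp_le {d : ℝ} (hd : 0 < d) {A : Set ℝ} (hA : MeasurableSet A)
    (hAb : ∀ v ∈ A, d < |b v|) {s : Set ℝ} (hs : MeasurableSet s)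
    (hφ : ∀ t ∈ s, HasDerivWithinAt φ (b (φ t)) s t) (hinj : InjOn φ s) :
    ∫⁻ t in s, A.indicator 1 (φ t) ≤ volume A / ENNReal.ofReal d := by
  rw [ENNReal.le_div_iff_mul_le (Or.inl (by simpa using hd)) (Or.inl ENNReal.ofReal_ne_top),
    mul_comm, ← lintegral_const_mul' _ _ ENNReal.ofReal_ne_top]
  calc ∫⁻ t in s, ENNReal.ofReal d * A.indicator 1 (φ t)
      ≤ ∫⁻ t in s, ENNReal.ofReal |b (φ t)| * A.indicator 1 (φ t) := by
        refine lintegral_mono fun t => ?_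
        by_cases hmem : φ t ∈ A
        · gcongr
          exact (hAb _ hmem).le
        · simp [hmem]
    _ = ∫⁻ v in φ '' s, A.indicator 1 v :=
        (lintegral_image_eq_lintegral_abs_deriv_mul hs hφ hinj _).symm
    _ ≤ ∫⁻ v, A.indicator 1 v := setLIntegral_le_lintegral _ _
    _ = volume A := lintegral_indicator_one hA

theorem lintegral_indicator_trajectory_le (hb : LipschitzWith K b)
    (hφ : ∀ t, 0 ≤ t → HasDerivAt φ (b (φ t)) t) {d : ℝ} (hd : 0 < d) {A : Set ℝ}
    (hA : MeasurableSet A) (hAb : ∀ v ∈ A, d < |b v|) :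
    ∫⁻ t in Ioi 0, A.indicator 1 (φ t) ≤ volume A / ENNReal.ofReal d := by
  have hT : IsOpen ({t | b (φ t) ≠ 0} ∩ Ioi 0) := by
    rw [inter_comm]
    exact ContinuousOn.isOpen_inter_preimage
      (fun t ht => (hφ t (le_of_lt ht)).continuousAt.continuousWithinAt) isOpen_Ioi
      (isOpen_compl_singleton.preimage hb.continuous)
  have hsupport : (fun t => A.indicator (1 : ℝ → ℝ≥0∞) (φ t)).support ⊆ {t | b (φ t) ≠ 0} := by
    intro t ht hzero
    have hmem : φ t ∈ A := by simpa using ht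
    linarith [hAb _ hmem, show |b (φ t)| = 0 by simp [hzero]]
  rw [← setLIntegral_eq_of_support_subset hsupport, Measure.restrict_restrict' measurableSet_Ioi]
  exact setLIntegral_indicator_comp_le hd hA hAb hT.measurableSet
    (fun t ht => (hφ t ht.2.le).hasDerivWithinAt) (injOn_trajectory hb hφ)

end Trajectory

theorem integral_le_toReal_of_enorm_le {α : Type*} [MeasurableSpace α] {μ : Measure α}
    {g : α → ℝ} {h : α → ℝ≥0∞} (hgh : ∀ᵐ x ∂μ, ‖g x‖ₑ ≤ h x) (hfin : ∫⁻ x, h x ∂μ ≠ ⊤) :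
    ∫ x, g x ∂μ ≤ (∫⁻ x, h x ∂μ).toReal := by
  calc ∫ x, g x ∂μ ≤ ‖∫ x, g x ∂μ‖ := Real.le_norm_self _
    _ = ‖∫ x, g x ∂μ‖ₑ.toReal := by simp
    _ ≤ (∫⁻ x, h x ∂μ).toReal :=
        ENNReal.toReal_mono hfin
          ((enorm_integral_le_lintegral_enorm g).trans (lintegral_mono_ae hgh))

theorem restrict_le_smul_restrict_of_forall_subset {α : Type*} [MeasurableSpace α]
    {μ ν : Measure α} {S : Set α} (hS : MeasurableSet S) {c : ℝ≥0∞}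
    (h : ∀ A, MeasurableSet A → A ⊆ S → μ A ≤ c * ν A) : μ.restrict S ≤ c • ν.restrict S := by
  refine Measure.le_iff.2 fun E hE => ?_
  rw [Measure.restrict_apply hE, Measure.smul_apply, Measure.restrict_apply hE, smul_eq_mul]
  exact h _ (hE.inter hS) inter_subset_right

theorem exists_density_le_of_le_smul {α : Type*} [MeasurableSpace α] {μ ν : Measure α}
    [SigmaFinite μ] [SigmaFinite ν] {c : ℝ≥0∞} (hc : c ≠ ⊤) (h : μ ≤ c • ν) :
    ∃ p : α → ℝ, μ = ν.withDensity (fun x => ENNReal.ofReal (p x)) ∧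
      ∀ᵐ x ∂ν, p x ≤ c.toReal := by
  refine ⟨fun x => (μ.rnDeriv ν x).toReal, ?_, ?_⟩
  · have hfin : ν.withDensity (fun x => ENNReal.ofReal (μ.rnDeriv ν x).toReal)
        = ν.withDensity (μ.rnDeriv ν) := by
      refine withDensity_congr_ae ?_
      filter_upwards [Measure.rnDeriv_lt_top μ ν] with x hx
      exact ENNReal.ofReal_toReal hx.ne
    rw [hfin, Measure.withDensity_rnDeriv_eq _ _ (Measure.absolutelyContinuous_of_le_smul h)]
  · have hle : μ.rnDeriv ν ≤ᵐ[ν] fun _ => c := by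
      refine ae_le_of_forall_setLIntegral_le_of_sigmaFinite (Measure.measurable_rnDeriv _ _)
        fun s _ _ => ?_
      calc ∫⁻ x in s, μ.rnDeriv ν x ∂ν ≤ μ s := Measure.setLIntegral_rnDeriv_le s
        _ ≤ c * ν s := Measure.le_iff'.1 h s
        _ = ∫⁻ _ in s, c ∂ν := (setLIntegral_const s c).symm
    filter_upwards [hle] with x hx
    exact ENNReal.toReal_mono hc hx

def SatisfiesRepresentation (N : ℕ) (γt : ℝ → ℝ → ℝ) (f : Fin N → ℝ → ℝ)
    (aij : Fin N → Fin N → ℝ → ℝ) (m : Measure (Fin N → ℝ)) : Prop :=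
  ∀ g : (Fin N → ℝ) → ℝ, Measurable g → (∃ C, ∀ x, |g x| ≤ C) →
    ∫ x, g x ∂m = ∑ i, ∫ x, (f i (x i) *
      ∫ t in Ioi (0:ℝ), surv N γt f (jmap N aij i x) t * g (flowN N γt t (jmap N aij i x))) ∂m

section Marginal

variable {N : ℕ} {γt : ℝ → ℝ → ℝ} {f : Fin N → ℝ → ℝ} {aij : Fin N → Fin N → ℝ → ℝ}

theorem surv_le_one (hf : ∀ i v, 0 ≤ f i v) (x : Fin N → ℝ) {t : ℝ} (ht : 0 ≤ t) :
    surv N γt f x t ≤ 1 := by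
  rw [surv, Real.exp_le_one_iff, neg_nonpos]
  exact intervalIntegral.integral_nonneg ht fun s _ => Finset.sum_nonneg fun i _ => hf i _

theorem integral_surv_mul_indicator_le {K : ℝ≥0} {b : ℝ → ℝ} (hb : LipschitzWith K b)
    (hγ : ∀ v t, 0 ≤ t → HasDerivAt (fun s => γt s v) (b (γt t v)) t) (hf : ∀ i v, 0 ≤ f i v)
    {d : ℝ} (hd : 0 < d) {A : Set ℝ} (hA : MeasurableSet A) (hAb : ∀ v ∈ A, d < |b v|)
    (hvol : volume A ≠ ⊤) (y : Fin N → ℝ) (j : Fin N) :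
    ∫ t in Ioi 0, surv N γt f y t * A.indicator 1 (γt t (y j))
      ≤ (volume A / ENNReal.ofReal d).toReal := by
  have htime := lintegral_indicator_trajectory_le hb (hγ (y j)) hd hA hAb
  have hfin : volume A / ENNReal.ofReal d ≠ ⊤ := ENNReal.div_ne_top hvol (by simpa using hd)
  refine (integral_le_toReal_of_enorm_le ?_ (ne_top_of_le_ne_top hfin htime)).trans
    (ENNReal.toReal_mono hfin htime)
  refine (ae_restrict_iff' measurableSet_Ioi).2 (ae_of_all _ fun t ht => ?_)
  have hsurv := surv_le_one (γt := γt) hf y (le_of_lt ht)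
  by_cases hmem : γt t (y j) ∈ A
  · have hpos : 0 < surv N γt f y t := Real.exp_pos _
    simp only [hmem, indicator_of_mem, Pi.one_apply, mul_one, Real.enorm_eq_ofReal_abs,
      abs_of_pos hpos]
    exact ENNReal.ofReal_le_one.2 hsurv
  · simp [hmem]

theorem map_eval_apply_le {F : ℝ} (hF : 0 < F) {K : ℝ≥0} {b : ℝ → ℝ} (hb : LipschitzWith K b)
    (hγ : ∀ v t, 0 ≤ t → HasDerivAt (fun s => γt s v) (b (γt t v)) t) (hf : ∀ i v, 0 ≤ f i v)
    (hfF : ∀ i v, f i v ≤ F) {m : Measure (Fin N → ℝ)} [IsProbabilityMeasure m]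
    (hrep : SatisfiesRepresentation N γt f aij m) (j : Fin N) {d : ℝ} (hd : 0 < d)
    {A : Set ℝ} (hA : MeasurableSet A) (hAb : ∀ v ∈ A, d < |b v|) :
    m.map (fun x => x j) A ≤ ENNReal.ofReal (N * F / d) * volume A := by
  by_cases hvol : volume A = ⊤
  · simp [hvol, ENNReal.mul_top, hd, hF, Fin.pos j]
  set R := (volume A / ENNReal.ofReal d).toReal
  set g : (Fin N → ℝ) → ℝ := fun x => A.indicator 1 (x j)
  have hg : Measurable g := (measurable_one.indicator hA).comp (measurable_pi_apply j)
  have hg_bdd : ∃ C, ∀ x, |g x| ≤ C := ⟨1, fun x => by by_cases h : x j ∈ A <;> simp [g, h]⟩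
  have hg_int : ∫ x, g x ∂m = (m.map (fun x => x j)).real A := by
    rw [← integral_indicator_one hA, integral_map (measurable_pi_apply j).aemeasurable
      (measurable_one.indicator hA).aestronglyMeasurable]
  have hterm : ∀ i x, ∫ t in Ioi 0,
      surv N γt f (jmap N aij i x) t * g (flowN N γt t (jmap N aij i x)) ∈ Icc 0 R := fun i x =>
    ⟨integral_nonneg fun t => mul_nonneg (Real.exp_nonneg _)
      (indicator_nonneg (fun _ _ => zero_le_one) _),
    integral_surv_mul_indicator_le hb hγ hf hd hA hAb hvol _ j⟩
  have hreal : (m.map (fun x => x j)).real A ≤ N * F / d * volume.real A := by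
    rw [← hg_int, hrep g hg hg_bdd]
    calc _ ≤ ∑ _i : Fin N, F * R := Finset.sum_le_sum fun i _ => by
          simpa using integral_mono_of_nonneg (μ := m)
            (ae_of_all _ fun x => mul_nonneg (hf i _) (hterm i x).1) (integrable_const (F * R))
            (ae_of_all _ fun x => mul_le_mul (hfF i _) (hterm i x).2 (hterm i x).1 hF.le)
      _ = N * F / d * volume.real A := by
          simp only [Finset.sum_const, Finset.card_univ, Fintype.card_fin, nsmul_eq_mul, R,
            ENNReal.toReal_div, ENNReal.toReal_ofReal hd.le, measureReal_def]
          ring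
  calc m.map (fun x => x j) A = ENNReal.ofReal ((m.map (fun x => x j)).real A) :=
        (ofReal_measureReal (measure_ne_top _ _)).symm
    _ ≤ ENNReal.ofReal (N * F / d * volume.real A) := ENNReal.ofReal_le_ofReal hreal
    _ = ENNReal.ofReal (N * F / d) * volume A := by
        rw [ENNReal.ofReal_mul (by positivity), ofReal_measureReal hvol]

end Marginal

theorem marginal_density_bounded_general
    (N k : ℕ) (hN : 1 ≤ N) (F B : ℝ) (hF : 0 < F)
    (btilde : ℝ → ℝ) (hbC : ContDiff ℝ (k + 1 : ℕ) btilde)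
    (hbB : ∀ l ≤ k + 1, ∀ v : ℝ, |iteratedDeriv l btilde v| ≤ B)
    (γt : ℝ → ℝ → ℝ)
    (hγ : ∀ (v t : ℝ), 0 ≤ t → HasDerivAt (fun s => γt s v) (btilde (γt t v)) t)
    (f : Fin N → ℝ → ℝ) (hfpos : ∀ i v, 0 < f i v)
    (hfF : ∀ i, ∀ l ≤ k, ∀ v : ℝ, |iteratedDeriv l (f i) v| ≤ F)
    (aij : Fin N → Fin N → ℝ → ℝ)
    (m : Measure (Fin N → ℝ)) [IsProbabilityMeasure m]
    (hrep : ∀ g : (Fin N → ℝ) → ℝ, Measurable g → (∃ C, ∀ x, |g x| ≤ C) →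
      ∫ x, g x ∂m
        = ∑ i, ∫ x, (f i (x i) *
            ∫ t in Ioi (0:ℝ),
              surv N γt f (jmap N aij i x) t * g (flowN N γt t (jmap N aij i x))) ∂m) :
    ∀ d : ℝ, 0 < d →
      (m.map (fun x => x ⟨0, hN⟩)).restrict {v : ℝ | d < |btilde v|} ≪ volume ∧
      ∃ p : ℝ → ℝ,
        (m.map (fun x => x ⟨0, hN⟩)).restrict {v : ℝ | d < |btilde v|}
          = (volume.restrict {v : ℝ | d < |btilde v|}).withDensity
              (fun v => ENNReal.ofReal (p v)) ∧
        ∀ᵐ v ∂volume.restrict {v : ℝ | d < |btilde v|}, p v ≤ N * F / d := by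
  intro d hd
  have hb : LipschitzWith B.toNNReal btilde :=
    lipschitzWith_of_nnnorm_deriv_le (hbC.differentiable (by simp)) fun v => by
      have h1 := hbB 1 (by omega) v
      rw [iteratedDeriv_one] at h1
      rw [← NNReal.coe_le_coe, coe_nnnorm]
      exact h1.trans (Real.le_coe_toNNReal B)
  have hf_le : ∀ i v, f i v ≤ F := fun i v =>
    le_of_abs_le (by simpa using hfF i 0 (Nat.zero_le k) v)
  have hS : MeasurableSet {v : ℝ | d < |btilde v|} :=
    measurableSet_lt measurable_const hb.continuous.abs.measurable
  have hle := restrict_le_smul_restrict_of_forall_subset hS fun A hA hAS =>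
    map_eval_apply_le hF hb hγ (fun i v => (hfpos i v).le) hf_le hrep ⟨0, hN⟩ hd hA hAS
  obtain ⟨p, hp, hp_le⟩ := exists_density_le_of_le_smul ENNReal.ofReal_ne_top hle
  refine ⟨(Measure.absolutelyContinuous_of_le_smul hle).trans
    (Measure.absolutelyContinuous_of_le Measure.restrict_le_self), p, hp, ?_⟩
  simpa [ENNReal.toReal_ofReal (by positivity : (0:ℝ) ≤ N * F / d)] using hp_le

/-- the law `π` of the first coordinate under the invariant measure `m`,
restricted to `{v : |b̃(v)| > d}`, is absolutely continuous with respect to Lebesgue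
measure, with density bounded a.e. by `N·F/d` there. -/
theorem marginal_density_bounded
    (N k : ℕ) (hN : 1 ≤ N) (F B A a : ℝ)
    (hF : 0 < F) (hB : 0 < B) (hA : 0 < A) (ha : 0 < a)
    (btilde : ℝ → ℝ) (hbC : ContDiff ℝ (k + 1 : ℕ) btilde)
    (hbB : ∀ l ≤ k + 1, ∀ v : ℝ, |iteratedDeriv l btilde v| ≤ B)
    (γt : ℝ → ℝ → ℝ) (hγ0 : ∀ v : ℝ, γt 0 v = v)
    (hγ : ∀ (v t : ℝ), 0 ≤ t → HasDerivAt (fun s => γt s v) (btilde (γt t v)) t)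
    (f : Fin N → ℝ → ℝ) (hfpos : ∀ i v, 0 < f i v)
    (hfLip : ∀ i, ∃ L : NNReal, LipschitzWith L (f i))
    (hfC : ∀ i, ContDiff ℝ (k : ℕ) (f i))
    (hfF : ∀ i, ∀ l ≤ k, ∀ v : ℝ, |iteratedDeriv l (f i) v| ≤ F)
    (aij : Fin N → Fin N → ℝ → ℝ)
    (haC : ∀ i j, i ≠ j → ContDiff ℝ (⊤ : ℕ∞) (aij i j))
    (haA : ∀ i j, i ≠ j → ∀ (l : ℕ) (v : ℝ), |iteratedDeriv l (aij i j) v| ≤ A)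
    (haInv : ∀ i j, i ≠ j → ∀ v : ℝ, a ≤ |deriv (fun w => w + aij i j w) v|)
    (hdiv : ∀ x : Fin N → ℝ,
      (∫⁻ s in Ioi (0:ℝ), ENNReal.ofReal (∑ i, f i (γt s (x i)))) = ⊤)
    (m : Measure (Fin N → ℝ)) [IsProbabilityMeasure m]
    (hrep : ∀ g : (Fin N → ℝ) → ℝ, Measurable g → (∃ C, ∀ x, |g x| ≤ C) →
      ∫ x, g x ∂m
        = ∑ i, ∫ x, (f i (x i) *
            ∫ t in Ioi (0:ℝ),
              surv N γt f (jmap N aij i x) t * g (flowN N γt t (jmap N aij i x))) ∂m) :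
    ∀ d : ℝ, 0 < d →
      (m.map (fun x => x ⟨0, hN⟩)).restrict {v : ℝ | d < |btilde v|} ≪ volume ∧
      ∃ p : ℝ → ℝ,
        (m.map (fun x => x ⟨0, hN⟩)).restrict {v : ℝ | d < |btilde v|}
          = (volume.restrict {v : ℝ | d < |btilde v|}).withDensity
              (fun v => ENNReal.ofReal (p v)) ∧
        ∀ᵐ v ∂volume.restrict {v : ℝ | d < |btilde v|}, p v ≤ N * F / d :=
  marginal_density_bounded_general N k hN F B hF btilde hbC hbB γt hγ f hfpos hfF aij m hrep
end
end
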